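/- arXiv:1809.02103 — 6 statements merged into one kernel-verified Lean document; each statement's English description precedes it below -/
import Mathlib

section
/- Let S be a measurable space and let μ be a measure on (0,∞) × S (with the product of the Borel σ-algebra on (0,∞) and the σ-algebra of S). Let α > 0. Assume that for every a > 0 the pushforward of μ under the map (r,z) ↦ (a·r, z) equals a^α · μ (equivalently, μ(aA) = a^{−α} μ(A) for every measurable set A, where aA = {(ar,z) : (r,z) ∈ A}), and that c := μ((1,∞) × S) satisfies 0 < c < ∞. Define the probability measure Γ₁ on S by Γ₁(B) := μ((1,∞) × B)/c. Then Γ₁ is a probability measure and μ equals the product measure c · (ν_α ⊗ Γ₁). -/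
open MeasureTheory Set

/-- The measure `ν_α` on `(0,∞)` with density `α r^{-α-1}` w.r.t. Lebesgue measure. -/
noncomputable def nuAlpha (α : ℝ) : Measure ℝ :=
  (volume.restrict (Set.Ioi (0:ℝ))).withDensity
    (fun r => ENNReal.ofReal (α * r ^ (-α - 1)))

lemma nuAlpha_Ioi {α : ℝ} (hα : 0 < α) {u : ℝ} (hu : 0 < u) :
    nuAlpha α (Set.Ioi u) = ENNReal.ofReal (u ^ (-α)) := by
  rw [nuAlpha, withDensity_apply _ measurableSet_Ioi,
    Measure.restrict_restrict measurableSet_Ioi,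
    inter_eq_self_of_subset_left (Ioi_subset_Ioi hu.le)]
  have hint : IntegrableOn (fun r : ℝ => α * r ^ (-α - 1)) (Ioi u) :=
    (integrableOn_Ioi_rpow_of_lt (by linarith) hu).const_mul α
  rw [← ofReal_integral_eq_lintegral_ofReal hint]
  · rw [integral_const_mul, integral_Ioi_rpow_of_lt (by linarith) hu]
    congr 1
    have : -α - 1 + 1 = -α := by ring
    rw [this]
    field_simp
  · filter_upwards [ae_restrict_mem measurableSet_Ioi] with r hr
    have : (0:ℝ) < r := hu.trans hr
    positivity

lemma nuAlpha_Iic_zero (α : ℝ) : nuAlpha α (Set.Iic 0) = 0 := by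
  rw [nuAlpha, withDensity_apply _ measurableSet_Iic,
    Measure.restrict_restrict measurableSet_Iic]
  have : Iic (0:ℝ) ∩ Ioi 0 = ∅ := by
    rw [Set.Iic_inter_Ioi, Set.Ioc_self]
  rw [this, Measure.restrict_empty, lintegral_zero_measure]

/-- A measure `μ` on `(0,∞) × S` which is homogeneous of order `-α`
(in the radial variable) and has `0 < μ((1,∞) × S) < ∞` must be the product measure
`c · (ν_α ⊗ Γ₁)`, where `c = μ((1,∞) × S)` and `Γ₁(B) = μ((1,∞) × B)/c`;
moreover `Γ₁` is a probability measure. -/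
theorem measure_eq_prod_of_scaling
    {S : Type*} [MeasurableSpace S]
    (μ : Measure (ℝ × S)) (α : ℝ) (hα : 0 < α)
    (hsupp : μ {p : ℝ × S | p.1 ≤ 0} = 0)
    (hscal : ∀ a : ℝ, 0 < a →
      Measure.map (fun p : ℝ × S => (a * p.1, p.2)) μ = ENNReal.ofReal (a ^ α) • μ)
    (hc_pos : 0 < μ ((Set.Ioi (1:ℝ)) ×ˢ (Set.univ : Set S)))
    (hc_fin : μ ((Set.Ioi (1:ℝ)) ×ˢ (Set.univ : Set S)) < ⊤) :
    IsProbabilityMeasure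
      ((μ ((Set.Ioi (1:ℝ)) ×ˢ (Set.univ : Set S)))⁻¹ •
        Measure.map Prod.snd (μ.restrict ((Set.Ioi (1:ℝ)) ×ˢ (Set.univ : Set S)))) ∧
    μ = (μ ((Set.Ioi (1:ℝ)) ×ˢ (Set.univ : Set S))) •
      ((nuAlpha α).prod
        ((μ ((Set.Ioi (1:ℝ)) ×ˢ (Set.univ : Set S)))⁻¹ •
          Measure.map Prod.snd (μ.restrict ((Set.Ioi (1:ℝ)) ×ˢ (Set.univ : Set S))))) := by
  set c := μ ((Set.Ioi (1:ℝ)) ×ˢ (Set.univ : Set S)) with hc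
  set Γ : Measure S := c⁻¹ •
    Measure.map Prod.snd (μ.restrict ((Set.Ioi (1:ℝ)) ×ˢ (Set.univ : Set S))) with hΓ
  have hcinv : c * c⁻¹ = 1 := ENNReal.mul_inv_cancel hc_pos.ne' hc_fin.ne
  -- value of Γ on measurable sets
  have hΓ_apply : ∀ B : Set S, MeasurableSet B → Γ B = c⁻¹ * μ (Set.Ioi (1:ℝ) ×ˢ B) := by
    intro B hB
    rw [hΓ, Measure.smul_apply, smul_eq_mul,
      Measure.map_apply measurable_snd hB,
      Measure.restrict_apply (measurable_snd hB)]
    congr 2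
    ext p
    simp [Set.mem_prod, and_comm]
  -- scaling formula for μ on Ioi-rectangles
  have hμIoi : ∀ u : ℝ, 0 < u → ∀ B : Set S, MeasurableSet B →
      μ (Set.Ioi u ×ˢ B) = ENNReal.ofReal (u ^ (-α)) * μ (Set.Ioi (1:ℝ) ×ˢ B) := by
    intro u hu B hB
    have hf : Measurable (fun p : ℝ × S => (u * p.1, p.2)) :=
      (measurable_const.mul measurable_fst).prodMk measurable_snd
    have h1 := congrArg (fun m : Measure (ℝ × S) => m (Set.Ioi u ×ˢ B)) (hscal u hu)
    simp only [Measure.smul_apply, smul_eq_mul] at h1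
    rw [Measure.map_apply hf (measurableSet_Ioi.prod hB)] at h1
    have hpre : (fun p : ℝ × S => (u * p.1, p.2)) ⁻¹' (Set.Ioi u ×ˢ B)
        = Set.Ioi (1:ℝ) ×ˢ B := by
      ext p
      simp only [Set.mem_preimage, Set.mem_prod, Set.mem_Ioi]
      constructor
      · rintro ⟨h, hb⟩
        exact ⟨(lt_mul_iff_one_lt_right hu).mp h, hb⟩
      · rintro ⟨h, hb⟩
        exact ⟨(lt_mul_iff_one_lt_right hu).mpr h, hb⟩
    rw [hpre] at h1
    rw [h1, ← mul_assoc, ← ENNReal.ofReal_mul (Real.rpow_nonneg hu.le _),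
      ← Real.rpow_add hu, neg_add_cancel]
    simp
  set ν : Measure (ℝ × S) := c • ((nuAlpha α).prod Γ) with hν
  -- Γ is a probability measure
  have hΓ_univ : Γ Set.univ = 1 := by
    rw [hΓ_apply _ MeasurableSet.univ, ← hc, mul_comm, hcinv]
  have hΓ_prob : IsProbabilityMeasure Γ := ⟨hΓ_univ⟩
  refine ⟨hΓ_prob, ?_⟩
  -- value of ν on Ioi-rectangles
  have hνIoi : ∀ u : ℝ, 0 < u → ∀ B : Set S, MeasurableSet B →
      ν (Set.Ioi u ×ˢ B) = ENNReal.ofReal (u ^ (-α)) * μ (Set.Ioi (1:ℝ) ×ˢ B) := by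
    intro u hu B hB
    rw [hν, Measure.smul_apply, smul_eq_mul,
      Measure.prod_prod, nuAlpha_Ioi hα hu, hΓ_apply _ hB]
    rw [show c * (ENNReal.ofReal (u ^ (-α)) * (c⁻¹ * μ (Set.Ioi (1:ℝ) ×ˢ B)))
        = (c * c⁻¹) * (ENNReal.ofReal (u ^ (-α)) * μ (Set.Ioi (1:ℝ) ×ˢ B)) from by ring,
      hcinv, one_mul]
  -- ν is null on the nonpositive half-plane
  have hν0 : ν {p : ℝ × S | p.1 ≤ 0} = 0 := by
    have : {p : ℝ × S | p.1 ≤ 0} = Set.Iic (0:ℝ) ×ˢ (Set.univ : Set S) := by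
      ext p; simp [Set.mem_prod]
    rw [this, hν, Measure.smul_apply, smul_eq_mul, Measure.prod_prod,
      nuAlpha_Iic_zero]
    simp
  -- the exhaustion
  set u : ℕ → ℝ := fun n => 1 / ((n : ℝ) + 1) with hu_def
  have hu_pos : ∀ n, 0 < u n := fun n => by positivity
  set A : ℕ → Set (ℝ × S) := fun n => Set.Ioi (u n) ×ˢ (Set.univ : Set S) with hA
  have hA_meas : ∀ n, MeasurableSet (A n) := fun n =>
    measurableSet_Ioi.prod MeasurableSet.univ
  have hA_mono : Monotone A := by
    intro n m hnm
    refine Set.prod_mono (Set.Ioi_subset_Ioi ?_) subset_rfl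
    apply one_div_le_one_div_of_le (by positivity)
    have h : (n:ℝ) ≤ m := Nat.cast_le.mpr hnm
    linarith
  have hA_union : ⋃ n, A n = Set.Ioi (0:ℝ) ×ˢ (Set.univ : Set S) := by
    ext p
    simp only [Set.mem_iUnion, hA, Set.mem_prod, Set.mem_Ioi, Set.mem_univ, and_true]
    constructor
    · rintro ⟨n, hn⟩; exact (hu_pos n).trans hn
    · intro hp
      obtain ⟨n, hn⟩ := exists_nat_one_div_lt hp
      exact ⟨n, hn⟩
  -- restricted measures agree
  have key : ∀ n, μ.restrict (A n) = ν.restrict (A n) := by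
    intro n
    have hCR : MeasurableSpace.generateFrom (Set.range (Set.Ioi : ℝ → Set ℝ))
        = Real.measurableSpace :=
      (BorelSpace.measurable_eq.trans (borel_eq_generateFrom_Ioi ℝ)).symm
    have hgen : (Prod.instMeasurableSpace : MeasurableSpace (ℝ × S)) =
        MeasurableSpace.generateFrom
          (Set.image2 (· ×ˢ ·) (Set.range (Set.Ioi : ℝ → Set ℝ))
            {B : Set S | MeasurableSet B}) := by
      refine (generateFrom_eq_prod hCR
        MeasurableSpace.generateFrom_measurableSet ?_
        isCountablySpanning_measurableSet).symm
      refine ⟨fun n => Set.Ioi (-(n:ℝ)), fun n => Set.mem_range_self _, ?_⟩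
      ext x
      simp only [Set.mem_iUnion, Set.mem_Ioi, Set.mem_univ, iff_true]
      obtain ⟨n, hn⟩ := exists_nat_gt (-x)
      exact ⟨n, by linarith⟩
    have hpiR : IsPiSystem (Set.range (Set.Ioi : ℝ → Set ℝ)) := by
      rintro _ ⟨a, rfl⟩ _ ⟨b, rfl⟩ -
      exact ⟨max a b, by rw [Set.Ioi_inter_Ioi]⟩
    have hpi : IsPiSystem (Set.image2 (· ×ˢ ·) (Set.range (Set.Ioi : ℝ → Set ℝ))
        {B : Set S | MeasurableSet B}) :=
      hpiR.prod MeasurableSpace.isPiSystem_measurableSet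
    have hfin : IsFiniteMeasure (μ.restrict (A n)) := by
      constructor
      rw [Measure.restrict_apply_univ, hA,
        hμIoi _ (hu_pos n) _ MeasurableSet.univ]
      exact ENNReal.mul_lt_top ENNReal.ofReal_lt_top hc_fin
    have inter_eq : ∀ t : ℝ, ∀ B : Set S,
        (Set.Ioi t ×ˢ B) ∩ A n = Set.Ioi (max t (u n)) ×ˢ B := by
      intro t B
      ext p
      simp only [Set.mem_inter_iff, hA, Set.mem_prod, Set.mem_Ioi, Set.mem_univ,
        and_true, max_lt_iff]
      tauto
    refine MeasureTheory.ext_of_generate_finite _ hgen hpi (μ := μ.restrict (A n)) ?_ ?_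
    · rintro _ ⟨_, ⟨t, rfl⟩, B, hB, rfl⟩
      have hBm : MeasurableSet B := hB
      have hs : MeasurableSet (Set.Ioi t ×ˢ B) := measurableSet_Ioi.prod hBm
      rw [Measure.restrict_apply hs, Measure.restrict_apply hs, inter_eq,
        hμIoi _ (lt_max_of_lt_right (hu_pos n)) _ hBm,
        hνIoi _ (lt_max_of_lt_right (hu_pos n)) _ hBm]
    · rw [Measure.restrict_apply_univ, Measure.restrict_apply_univ, hA,
        hμIoi _ (hu_pos n) _ MeasurableSet.univ,
        hνIoi _ (hu_pos n) _ MeasurableSet.univ]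
  -- conclude by exhaustion
  have exhaust : ∀ ρ : Measure (ℝ × S), ρ {p : ℝ × S | p.1 ≤ 0} = 0 →
      ∀ s : Set (ℝ × S), MeasurableSet s → ρ s = ⨆ n, ρ (s ∩ A n) := by
    intro ρ hρ0 s hs
    have h1 : ρ (s \ (Set.Ioi (0:ℝ) ×ˢ (Set.univ : Set S))) = 0 := by
      refine measure_mono_null ?_ hρ0
      intro p hp
      simp only [Set.mem_diff, Set.mem_prod, Set.mem_Ioi, Set.mem_univ, and_true] at hp
      exact le_of_not_gt hp.2
    have h2 : ρ s = ρ (s ∩ (Set.Ioi (0:ℝ) ×ˢ (Set.univ : Set S))) := by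
      have := measure_inter_add_diff (μ := ρ)
        (t := Set.Ioi (0:ℝ) ×ˢ (Set.univ : Set S)) s
        (measurableSet_Ioi.prod MeasurableSet.univ)
      rw [h1, add_zero] at this
      exact this.symm
    rw [h2, ← hA_union, Set.inter_iUnion]
    exact Directed.measure_iUnion ((Monotone.directed_le
      (fun i j hij => Set.inter_subset_inter_right _ (hA_mono hij))))
  ext s hs
  rw [exhaust μ hsupp s hs, exhaust ν hν0 s hs]
  congr 1
  ext n
  have := congrArg (fun m : Measure (ℝ × S) => m s) (key n)
  simpa [Measure.restrict_apply hs] using this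
end

section
/- Let S be a measurable space, Γ₁ a probability measure on S, α ∈ (0,2), c > 0, and m ≥ 1. Let f = (f_1,…,f_m) : S → ℝ^m be measurable with |f_i(z)| ≤ 1 for all z ∈ S and all i. Let μ be the pushforward of the measure c · (ν_α ⊗ Γ₁) on (0,∞) × S under the map (r,z) ↦ r·f(z) ∈ ℝ^m. If Γ₁({z ∈ S : f_i(z) = 0}) = 0 for every i ∈ {1,…,m}, then μ is a Lévy measure on ℝ^m: μ({0}) = 0 and ∫_{ℝ^m} min(|y|², 1) μ(dy) < ∞, where |y| denotes the Euclidean norm. -/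
open MeasureTheory Set

/-- Let `μ` be the pushforward of `c · (ν_α ⊗ Γ₁)` under
`(r,z) ↦ r • f(z) ∈ ℝᵐ`, where `|fᵢ(z)| ≤ 1` and `Γ₁({fᵢ = 0}) = 0` for each `i`.
Then `μ` is a Lévy measure on `ℝᵐ`: `μ({0}) = 0` and `∫ min(|y|²,1) μ(dy) < ∞`. -/
theorem pushforward_is_levy_measure
    {S : Type*} [MeasurableSpace S] (Γ₁ : Measure S) [IsProbabilityMeasure Γ₁]
    (α : ℝ) (hα0 : 0 < α) (hα2 : α < 2) (c : ℝ) (hc : 0 < c)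
    (m : ℕ) (hm : 1 ≤ m)
    (f : S → EuclideanSpace ℝ (Fin m)) (hf : Measurable f)
    (hf_le : ∀ z : S, ∀ i : Fin m, |f z i| ≤ 1)
    (hf_ne : ∀ i : Fin m, Γ₁ {z : S | f z i = 0} = 0) :
    (Measure.map (fun p : ℝ × S => p.1 • f p.2)
        (ENNReal.ofReal c • ((nuAlpha α).prod Γ₁))) {0} = 0 ∧
    ∫⁻ y, ENNReal.ofReal (min (‖y‖ ^ 2) 1)
        ∂(Measure.map (fun p : ℝ × S => p.1 • f p.2)
          (ENNReal.ofReal c • ((nuAlpha α).prod Γ₁))) < ⊤ := by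
  have hφ : Measurable fun p : ℝ × S => p.1 • f p.2 :=
    measurable_fst.smul (hf.comp measurable_snd)
  set ν := nuAlpha α with hν
  have hν0 : ν {(0:ℝ)} = 0 := by
    have h0 : (volume.restrict (Set.Ioi (0:ℝ))) {0} = 0 := by
      rw [Measure.restrict_apply (measurableSet_singleton 0)]
      have : ({(0:ℝ)} : Set ℝ) ∩ Set.Ioi 0 = ∅ := by
        ext x
        simp (config := { contextual := true }) [Set.mem_Ioi]
      simp [this]
    exact withDensity_absolutelyContinuous _ _ h0
  constructor
  · rw [Measure.map_apply hφ (measurableSet_singleton 0), Measure.smul_apply,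
      smul_eq_mul]
    have i0 : Fin m := ⟨0, hm⟩
    have hsub : (fun p : ℝ × S => p.1 • f p.2) ⁻¹' {0} ⊆
        (({(0:ℝ)} : Set ℝ) ×ˢ (univ : Set S)) ∪
          ((univ : Set ℝ) ×ˢ {z : S | f z i0 = 0}) := by
      rintro ⟨r, z⟩ hp
      simp only [mem_preimage, mem_singleton_iff] at hp
      rcases smul_eq_zero.mp hp with h | h
      · exact Or.inl ⟨h, trivial⟩
      · refine Or.inr ⟨trivial, ?_⟩
        simp only [mem_setOf_eq, h]
        rfl
    have h1 : (ν.prod Γ₁) (({(0:ℝ)} : Set ℝ) ×ˢ (univ : Set S)) = 0 := by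
      rw [Measure.prod_prod, hν0, zero_mul]
    have h2 : (ν.prod Γ₁) ((univ : Set ℝ) ×ˢ {z : S | f z i0 = 0}) = 0 := by
      rw [Measure.prod_prod, hf_ne i0, mul_zero]
    rw [measure_mono_null hsub (measure_union_null h1 h2), mul_zero]
  · have hg : Measurable fun y : EuclideanSpace ℝ (Fin m) =>
        ENNReal.ofReal (min (‖y‖ ^ 2) 1) :=
      ((measurable_norm.pow_const 2).min measurable_const).ennreal_ofReal
    rw [lintegral_map hg hφ, lintegral_smul_measure]
    have key : ∀ p : ℝ × S, ENNReal.ofReal (min (‖p.1 • f p.2‖ ^ 2) 1)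
        ≤ ENNReal.ofReal (min ((m : ℝ) * p.1 ^ 2) 1) := by
      rintro ⟨r, z⟩
      apply ENNReal.ofReal_le_ofReal
      refine min_le_min ?_ le_rfl
      have hb : ‖f z‖ ^ 2 ≤ (m : ℝ) := by
        rw [EuclideanSpace.norm_eq, Real.sq_sqrt (by positivity)]
        calc ∑ i, ‖f z i‖ ^ 2 ≤ ∑ _i : Fin m, (1:ℝ) := by
              refine Finset.sum_le_sum fun i _ => ?_
              rw [Real.norm_eq_abs]
              nlinarith [hf_le z i, abs_nonneg (f z i)]
          _ = m := by simp
      calc ‖r • f z‖ ^ 2 = r ^ 2 * ‖f z‖ ^ 2 := by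
            rw [norm_smul, mul_pow, Real.norm_eq_abs, sq_abs]
        _ ≤ (m : ℝ) * r ^ 2 := by nlinarith [sq_nonneg r]
    have hG : Measurable fun r : ℝ => ENNReal.ofReal (min ((m : ℝ) * r ^ 2) 1) :=
      ((measurable_const.mul (measurable_id.pow_const 2)).min
        measurable_const).ennreal_ofReal
    have step1 : ∫⁻ p, ENNReal.ofReal (min (‖p.1 • f p.2‖ ^ 2) 1) ∂(ν.prod Γ₁)
        ≤ ∫⁻ r, ENNReal.ofReal (min ((m : ℝ) * r ^ 2) 1) ∂ν := by
      refine le_trans (lintegral_mono key) ?_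
      rw [lintegral_prod (fun p => ENNReal.ofReal (min ((m : ℝ) * p.1 ^ 2) 1))
        ((hG.comp measurable_fst).aemeasurable)]
      simp [lintegral_const]
    have hdens : Measurable fun r : ℝ => ENNReal.ofReal (α * r ^ (-α - 1)) := by
      fun_prop
    have hJ : ∫⁻ r, ENNReal.ofReal (min ((m : ℝ) * r ^ 2) 1) ∂ν < ⊤ := by
      rw [hν, nuAlpha, lintegral_withDensity_eq_lintegral_mul _ hdens hG]
      rw [← Set.Ioc_union_Ioi_eq_Ioi (zero_le_one (α := ℝ)),
        lintegral_union measurableSet_Ioi (Set.Ioc_disjoint_Ioi le_rfl)]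
      refine ENNReal.add_lt_top.mpr ⟨?_, ?_⟩
      · have hb : ∀ r ∈ Set.Ioc (0:ℝ) 1,
            ENNReal.ofReal (α * r ^ (-α - 1)) *
              ENNReal.ofReal (min ((m : ℝ) * r ^ 2) 1)
              ≤ ENNReal.ofReal (α * m * r ^ (1 - α)) := by
          intro r hr
          have hr0 : (0:ℝ) < r := hr.1
          calc ENNReal.ofReal (α * r ^ (-α - 1)) *
                ENNReal.ofReal (min ((m : ℝ) * r ^ 2) 1)
              ≤ ENNReal.ofReal (α * r ^ (-α - 1)) *
                ENNReal.ofReal ((m : ℝ) * r ^ 2) :=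
                mul_le_mul_right (ENNReal.ofReal_le_ofReal (min_le_left _ _)) _
            _ = ENNReal.ofReal (α * r ^ (-α - 1) * ((m : ℝ) * r ^ 2)) := by
                rw [← ENNReal.ofReal_mul (by positivity)]
            _ = ENNReal.ofReal (α * m * r ^ (1 - α)) := by
                congr 1
                have h2 : (1 - α) = (-α - 1) + 2 := by ring
                rw [h2, Real.rpow_add hr0,
                  show ((2:ℝ)) = ((2:ℕ):ℝ) by norm_num, Real.rpow_natCast]
                ring
        calc ∫⁻ r in Set.Ioc (0:ℝ) 1,
              ((fun r : ℝ => ENNReal.ofReal (α * r ^ (-α - 1))) *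
                fun r : ℝ => ENNReal.ofReal (min ((m : ℝ) * r ^ 2) 1)) r
            ≤ ∫⁻ r in Set.Ioc (0:ℝ) 1, ENNReal.ofReal (α * m * r ^ (1 - α)) :=
              setLIntegral_mono' measurableSet_Ioc (by
                intro r hr
                simpa [Pi.mul_apply] using hb r hr)
          _ < ⊤ := by
              have hi : IntegrableOn (fun r : ℝ => α * m * r ^ (1 - α))
                  (Set.Ioc (0:ℝ) 1) volume := by
                have h1 : IntervalIntegrable (fun x : ℝ => x ^ (1 - α))
                    volume 0 1 := intervalIntegral.intervalIntegrable_rpow'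
                      (by linarith)
                have h2 := intervalIntegrable_iff.mp h1
                rw [Set.uIoc_of_le (zero_le_one (α := ℝ))] at h2
                exact h2.const_mul (α * m)
              exact hi.lintegral_lt_top
      · have hb : ∀ r ∈ Set.Ioi (1:ℝ),
            ENNReal.ofReal (α * r ^ (-α - 1)) *
              ENNReal.ofReal (min ((m : ℝ) * r ^ 2) 1)
              ≤ ENNReal.ofReal (α * r ^ (-α - 1)) := by
          intro r _
          calc ENNReal.ofReal (α * r ^ (-α - 1)) *
                ENNReal.ofReal (min ((m : ℝ) * r ^ 2) 1)
              ≤ ENNReal.ofReal (α * r ^ (-α - 1)) * ENNReal.ofReal 1 :=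
                mul_le_mul_right (ENNReal.ofReal_le_ofReal (min_le_right _ _)) _
            _ = ENNReal.ofReal (α * r ^ (-α - 1)) := by
                simp
        calc ∫⁻ r in Set.Ioi (1:ℝ),
              ((fun r : ℝ => ENNReal.ofReal (α * r ^ (-α - 1))) *
                fun r : ℝ => ENNReal.ofReal (min ((m : ℝ) * r ^ 2) 1)) r
            ≤ ∫⁻ r in Set.Ioi (1:ℝ), ENNReal.ofReal (α * r ^ (-α - 1)) :=
              setLIntegral_mono' measurableSet_Ioi (by
                intro r hr
                simpa [Pi.mul_apply] using hb r hr)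
          _ < ⊤ := by
              have hi : IntegrableOn (fun r : ℝ => α * r ^ (-α - 1))
                  (Set.Ioi (1:ℝ)) volume :=
                (integrableOn_Ioi_rpow_of_lt (by linarith) one_pos).const_mul α
              exact hi.lintegral_lt_top
    exact lt_of_le_of_lt (mul_le_mul_right step1 _)
      (ENNReal.mul_lt_top ENNReal.ofReal_lt_top hJ)
end

section
/- Let α > 0 and let μ be a measure on ℝ (with the Borel σ-algebra) such that μ({0}) = 0, μ(hA) = h^{−α} μ(A) for every h > 0 and every Borel set A ⊆ ℝ (where hA = {h·y : y ∈ A}), and such that c⁺ := μ((1,∞)) < ∞ and c⁻ := μ((−∞,−1)) < ∞. Then μ is absolutely continuous with respect to Lebesgue measure with density μ(dy) = (c⁺ α y^{−α−1} 1_{(0,∞)}(y) + c⁻ α (−y)^{−α−1} 1_{(−∞,0)}(y)) dy. -/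
open MeasureTheory Set
open scoped ENNReal

/-!
Scaling pins down the tails: `μ (a, ∞) = c⁺ a^(-α)` and `μ (-∞, -a) = c⁻ a^(-α)` for
`a > 0`, and integrating the power-law density gives the same tails. On `(0, ∞)` the
half-lines `(a, ∞)`, `a > 0`, form a π-system generating the Borel sets on which both measures
are finite, so the two measures agree there; reflecting `y ↦ -y` gives agreement on `(-∞, 0)`,
and neither measure charges `0`.
-/

namespace MeasureTheory.Measure

variable {μ ν : Measure ℝ}

theorem eq_restrict_Iio_add_restrict_Ioi {a : ℝ} (ha : μ {a} = 0) :
    μ = μ.restrict (Iio a) + μ.restrict (Ioi a) := by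
  rw [restrict_congr_set (Iio_ae_eq_Iic' ha), ← compl_Ioi, add_comm,
    restrict_add_restrict_compl measurableSet_Ioi]

theorem restrict_Ioi_apply_Ioi_of_le {a b : ℝ} (hab : a ≤ b) :
    μ.restrict (Ioi a) (Ioi b) = μ (Ioi b) := by
  rw [restrict_apply measurableSet_Ioi, inter_eq_left.2 (Ioi_subset_Ioi hab)]

theorem restrict_Ioi_apply_inter_Iic (a : ℝ) (s : Set ℝ) :
    μ.restrict (Ioi a) (s ∩ Iic a) = 0 := by
  rw [restrict_apply' measurableSet_Ioi, inter_assoc, Iic_inter_Ioi, Ioc_self, inter_empty,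
    measure_empty]

theorem restrict_Ioi_zero_eq_of_measure_Ioi_eq (hfin : ∀ a, 0 < a → μ (Ioi a) ≠ ∞)
    (h : ∀ a, 0 < a → μ (Ioi a) = ν (Ioi a)) : μ.restrict (Ioi 0) = ν.restrict (Ioi 0) := by
  have hT : ⋃₀ insert (Iic 0) (range fun n : ℕ => Ioi (1 / ((n : ℝ) + 1))) = univ := by
    refine eq_univ_of_forall fun x => ?_
    rcases le_or_gt x 0 with hx | hx
    · exact ⟨Iic 0, mem_insert _ _, hx⟩
    · obtain ⟨n, hn⟩ := exists_nat_one_div_lt hx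
      exact ⟨_, mem_insert_of_mem _ ⟨n, rfl⟩, hn⟩
  refine ext_of_generateFrom_of_cover
    (BorelSpace.measurable_eq.trans (borel_eq_generateFrom_Ioi ℝ))
    ((countable_range _).insert _) isPiSystem_Ioi hT ?_ ?_ ?_
  · rintro _ (rfl | ⟨n, rfl⟩)
    · rw [← univ_inter (Iic 0), restrict_Ioi_apply_inter_Iic 0]
      exact ENNReal.zero_ne_top
    · rw [restrict_Ioi_apply_Ioi_of_le (by positivity)]
      exact hfin _ (by positivity)
  · rintro _ (rfl | ⟨n, rfl⟩) _ ⟨a, rfl⟩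
    · rw [restrict_Ioi_apply_inter_Iic 0, restrict_Ioi_apply_inter_Iic 0]
    · have hb : (0 : ℝ) < 1 / ((n : ℝ) + 1) := by positivity
      rw [Ioi_inter_Ioi, restrict_Ioi_apply_Ioi_of_le (le_max_of_le_right hb.le),
        restrict_Ioi_apply_Ioi_of_le (le_max_of_le_right hb.le), h _ (lt_max_of_lt_right hb)]
  · rintro _ (rfl | ⟨n, rfl⟩)
    · rw [← univ_inter (Iic 0), restrict_Ioi_apply_inter_Iic 0, restrict_Ioi_apply_inter_Iic 0]
    · have hb : (0 : ℝ) < 1 / ((n : ℝ) + 1) := by positivity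
      rw [restrict_Ioi_apply_Ioi_of_le hb.le, restrict_Ioi_apply_Ioi_of_le hb.le, h _ hb]

theorem restrict_Iio_zero_eq_of_measure_Iio_eq (hfin : ∀ a < 0, μ (Iio a) ≠ ∞)
    (h : ∀ a < 0, μ (Iio a) = ν (Iio a)) : μ.restrict (Iio 0) = ν.restrict (Iio 0) := by
  have hpre : ∀ a : ℝ, Neg.neg ⁻¹' Ioi a = Iio (-a) := fun a => by ext; simp
  have key := restrict_Ioi_zero_eq_of_measure_Ioi_eq (μ := μ.map Neg.neg) (ν := ν.map Neg.neg)
    (fun a ha => by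
      rw [map_apply measurable_neg measurableSet_Ioi, hpre]; exact hfin _ (neg_neg_of_pos ha))
    (fun a ha => by
      rw [map_apply measurable_neg measurableSet_Ioi, map_apply measurable_neg measurableSet_Ioi,
        hpre]
      exact h _ (neg_neg_of_pos ha))
  rw [restrict_map measurable_neg measurableSet_Ioi, restrict_map measurable_neg measurableSet_Ioi,
    hpre, neg_zero] at key
  simpa [map_map measurable_neg measurable_neg, Function.comp_def] using congrArg (map Neg.neg) key

end MeasureTheory.Measure

theorem measure_Ioi_of_homogeneous {μ : Measure ℝ} {α : ℝ}
    (hscal : ∀ h : ℝ, 0 < h → ∀ A : Set ℝ, MeasurableSet A →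
      μ ((fun y => h * y) '' A) = ENNReal.ofReal (h ^ (-α)) * μ A) {a : ℝ} (ha : 0 < a) :
    μ (Ioi a) = ENNReal.ofReal (a ^ (-α)) * μ (Ioi 1) := by
  have := hscal a ha (Ioi 1) measurableSet_Ioi
  rwa [image_mul_left_Ioi ha, mul_one] at this

theorem measure_Iio_of_homogeneous {μ : Measure ℝ} {α : ℝ}
    (hscal : ∀ h : ℝ, 0 < h → ∀ A : Set ℝ, MeasurableSet A →
      μ ((fun y => h * y) '' A) = ENNReal.ofReal (h ^ (-α)) * μ A) {a : ℝ} (ha : a < 0) :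
    μ (Iio a) = ENNReal.ofReal ((-a) ^ (-α)) * μ (Iio (-1)) := by
  have := hscal (-a) (neg_pos.2 ha) (Iio (-1)) measurableSet_Iio
  rwa [image_mul_left_Iio (neg_pos.2 ha), mul_neg_one, neg_neg] at this

theorem lintegral_Ioi_ofReal_mul_rpow_neg_sub_one {α a : ℝ} (hα : 0 < α) (ha : 0 < a)
    (c : ℝ) :
    ∫⁻ x in Ioi a, ENNReal.ofReal (c * α * x ^ (-α - 1)) =
      ENNReal.ofReal (a ^ (-α)) * ENNReal.ofReal c := by
  have hexp : -α - 1 < -1 := by linarith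
  have hnonneg : ∀ x ∈ Ioi a, 0 ≤ α * x ^ (-α - 1) := fun x hx => by
    have : 0 < x := ha.trans hx
    positivity
  have hint :
      ∫⁻ x in Ioi a, ENNReal.ofReal (α * x ^ (-α - 1)) = ENNReal.ofReal (a ^ (-α)) := by
    rw [← ofReal_integral_eq_lintegral_ofReal
      ((integrableOn_Ioi_rpow_of_lt hexp ha).const_mul α)
      ((ae_restrict_iff' measurableSet_Ioi).2 (.of_forall hnonneg)),
      integral_const_mul, integral_Ioi_rpow_of_lt hexp ha]
    rw [show -α - 1 + 1 = -α by ring]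
    field_simp
  calc ∫⁻ x in Ioi a, ENNReal.ofReal (c * α * x ^ (-α - 1))
      = ∫⁻ x in Ioi a, ENNReal.ofReal c * ENNReal.ofReal (α * x ^ (-α - 1)) :=
        setLIntegral_congr_fun measurableSet_Ioi fun x hx => by
          rw [mul_assoc, ENNReal.ofReal_mul' (hnonneg x hx)]
    _ = ENNReal.ofReal (a ^ (-α)) * ENNReal.ofReal c := by
        rw [lintegral_const_mul _ (by fun_prop), hint, mul_comm]

noncomputable def powerLawDensity (α cp cm : ℝ) (y : ℝ) : ℝ≥0∞ :=
  if 0 < y then ENNReal.ofReal (cp * α * y ^ (-α - 1))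
  else if y < 0 then ENNReal.ofReal (cm * α * (-y) ^ (-α - 1))
  else 0

section powerLawDensity

variable {α a : ℝ} (cp cm : ℝ)

theorem withDensity_powerLawDensity_Ioi (hα : 0 < α) (ha : 0 < a) :
    volume.withDensity (powerLawDensity α cp cm) (Ioi a) =
      ENNReal.ofReal (a ^ (-α)) * ENNReal.ofReal cp := by
  rw [withDensity_apply _ measurableSet_Ioi,
    ← lintegral_Ioi_ofReal_mul_rpow_neg_sub_one hα ha cp]
  refine setLIntegral_congr_fun measurableSet_Ioi fun y hy => ?_
  rw [powerLawDensity, if_pos (ha.trans hy)]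

theorem withDensity_powerLawDensity_Iio (hα : 0 < α) (ha : a < 0) :
    volume.withDensity (powerLawDensity α cp cm) (Iio a) =
      ENNReal.ofReal ((-a) ^ (-α)) * ENNReal.ofReal cm := by
  have hpre : Neg.neg ⁻¹' Ioi (-a) = Iio a := by ext; simp
  rw [withDensity_apply _ measurableSet_Iio,
    ← lintegral_Ioi_ofReal_mul_rpow_neg_sub_one hα (neg_pos.2 ha) cm,
    ← (Measure.measurePreserving_neg volume).setLIntegral_comp_preimage_emb
      measurableEmbedding_neg (fun x => ENNReal.ofReal (cm * α * x ^ (-α - 1))), hpre]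
  refine setLIntegral_congr_fun measurableSet_Iio fun y hy => ?_
  rw [powerLawDensity, if_neg (not_lt.2 (hy.out.trans ha).le), if_pos (hy.out.trans ha)]

end powerLawDensity

theorem scaling_measure_density_general
    (μ : Measure ℝ) (α : ℝ) (hα : 0 < α)
    (h0 : μ {(0:ℝ)} = 0)
    (hscal : ∀ h : ℝ, 0 < h → ∀ A : Set ℝ, MeasurableSet A →
      μ ((fun y => h * y) '' A) = ENNReal.ofReal (h ^ (-α)) * μ A)
    (cp cm : ℝ)
    (hcp : μ (Set.Ioi (1:ℝ)) = ENNReal.ofReal cp)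
    (hcm : μ (Set.Iio (-1:ℝ)) = ENNReal.ofReal cm) :
    μ = volume.withDensity (fun y : ℝ =>
      if 0 < y then ENNReal.ofReal (cp * α * y ^ (-α - 1))
      else if y < 0 then ENNReal.ofReal (cm * α * (-y) ^ (-α - 1))
      else 0) := by
  change μ = volume.withDensity (powerLawDensity α cp cm)
  set ν := volume.withDensity (powerLawDensity α cp cm)
  have hμIoi (a : ℝ) (ha : 0 < a) :
      μ (Ioi a) = ENNReal.ofReal (a ^ (-α)) * ENNReal.ofReal cp := by
    rw [measure_Ioi_of_homogeneous hscal ha, hcp]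
  have hμIio (a : ℝ) (ha : a < 0) :
      μ (Iio a) = ENNReal.ofReal ((-a) ^ (-α)) * ENNReal.ofReal cm := by
    rw [measure_Iio_of_homogeneous hscal ha, hcm]
  have hν0 : ν {0} = 0 := withDensity_absolutelyContinuous _ _ Real.volume_singleton
  have hIoi (a : ℝ) (ha : 0 < a) : μ (Ioi a) = ν (Ioi a) := by
    rw [hμIoi a ha]
    exact (withDensity_powerLawDensity_Ioi cp cm hα ha).symm
  have hIio (a : ℝ) (ha : a < 0) : μ (Iio a) = ν (Iio a) := by
    rw [hμIio a ha]
    exact (withDensity_powerLawDensity_Iio cp cm hα ha).symm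
  calc μ = μ.restrict (Iio 0) + μ.restrict (Ioi 0) := Measure.eq_restrict_Iio_add_restrict_Ioi h0
    _ = ν.restrict (Iio 0) + ν.restrict (Ioi 0) := by
      rw [Measure.restrict_Iio_zero_eq_of_measure_Iio_eq
          (fun a ha => by rw [hμIio a ha]; finiteness) hIio,
        Measure.restrict_Ioi_zero_eq_of_measure_Ioi_eq
          (fun a ha => by rw [hμIoi a ha]; finiteness) hIoi]
    _ = ν := (Measure.eq_restrict_Iio_add_restrict_Ioi hν0).symm

/-- A measure `μ` on `ℝ` with `μ({0}) = 0` that is homogeneous of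
order `-α` (i.e. `μ(hA) = h^{-α} μ(A)` for all `h > 0`) and has finite tails
`c⁺ = μ((1,∞))`, `c⁻ = μ((-∞,-1))` is absolutely continuous with density
`c⁺ α y^{-α-1} 1_{(0,∞)}(y) + c⁻ α (-y)^{-α-1} 1_{(-∞,0)}(y)` w.r.t. Lebesgue measure. -/
theorem scaling_measure_density
    (μ : Measure ℝ) (α : ℝ) (hα : 0 < α)
    (h0 : μ {(0:ℝ)} = 0)
    (hscal : ∀ h : ℝ, 0 < h → ∀ A : Set ℝ, MeasurableSet A →
      μ ((fun y => h * y) '' A) = ENNReal.ofReal (h ^ (-α)) * μ A)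
    (cp cm : ℝ) (hcp0 : 0 ≤ cp) (hcm0 : 0 ≤ cm)
    (hcp : μ (Set.Ioi (1:ℝ)) = ENNReal.ofReal cp)
    (hcm : μ (Set.Iio (-1:ℝ)) = ENNReal.ofReal cm) :
    μ = volume.withDensity (fun y : ℝ =>
      if 0 < y then ENNReal.ofReal (cp * α * y ^ (-α - 1))
      else if y < 0 then ENNReal.ofReal (cm * α * (-y) ^ (-α - 1))
      else 0) :=
  scaling_measure_density_general μ α hα h0 hscal cp cm hcp hcm
end

section
/- Let W = {W(t)}_{t ∈ [0,1]} be a standard Brownian motion on a probability space (Ω,F,P): W(ω,0) = 0 for all ω; every sample path t ↦ W(ω,t) is continuous on [0,1]; for all 0 ≤ s ≤ t ≤ 1 the increment W(t) − W(s) has the Gaussian distribution with mean 0 and variance t − s; and for every finite sequence 0 ≤ t_0 ≤ t_1 ≤ … ≤ t_n ≤ 1 the increments W(t_1) − W(t_0), …, W(t_n) − W(t_{n−1}) are mutually independent. Then for every x > 0, P( sup_{t ∈ [0,1]} |W(t)| > x ) ≤ 4 · P( |W(1)| > x/2 ). -/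
/-!
On the grid `k / N` the values `S k = W (k / N)` form a random walk whose increments are
independent and symmetric. Lévy's first-passage argument bounds its maximum: if `|S|` first
exceeds `x` at time `k`, then, independently of the past, `S N - S k` has the sign of `S k` with
probability at least `1 / 2`, and then `|S N| ≥ |S k| > x`. Hence
`P (max_{k ≤ N} |S k| > x) ≤ 2 P (|W 1| > x)`. The dyadic grids increase, and by continuity of
the paths their maxima exhaust the event `sup_{[0,1]} |W| > x`.
-/

open MeasureTheory ProbabilityTheory Filter Set Finset Topology

section Symmetric

variable {μ : Measure ℝ}

lemma measure_Iic_zero_eq_measure_Ici_zero_of_map_neg (h : μ.map (fun x => -x) = μ) :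
    μ (Iic 0) = μ (Ici 0) := by
  conv_lhs => rw [← h]
  rw [Measure.map_apply measurable_neg measurableSet_Iic]
  congr 1
  ext y
  simp

lemma half_le_measure_Ici_zero_of_map_neg [IsProbabilityMeasure μ]
    (h : μ.map (fun x => -x) = μ) : 1 / 2 ≤ μ (Ici 0) := by
  refine ENNReal.div_le_of_le_mul ?_
  calc (1 : ENNReal) = μ (Ici 0 ∪ Iic 0) := by rw [Ici_union_Iic, measure_univ]
    _ ≤ μ (Ici 0) + μ (Iic 0) := measure_union_le _ _
    _ = μ (Ici 0) * 2 := by rw [measure_Iic_zero_eq_measure_Ici_zero_of_map_neg h, mul_two]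

lemma half_le_measure_Iic_zero_of_map_neg [IsProbabilityMeasure μ]
    (h : μ.map (fun x => -x) = μ) : 1 / 2 ≤ μ (Iic 0) :=
  measure_Iic_zero_eq_measure_Ici_zero_of_map_neg h ▸ half_le_measure_Ici_zero_of_map_neg h

lemma gaussianReal_zero_map_neg (v : NNReal) :
    (gaussianReal 0 v).map (fun x => -x) = gaussianReal 0 v := by
  rw [gaussianReal_map_neg, neg_zero]

end Symmetric

section RandomWalk

variable {Ω : Type*} {mΩ : MeasurableSpace Ω} {P : Measure Ω}

lemma measure_le_two_mul_measure_inter_of_indep {m₁ m₂ : MeasurableSpace Ω}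
    (h : Indep m₁ m₂ P) {A B : Set Ω} (hA : MeasurableSet[m₁] A) (hB : MeasurableSet[m₂] B)
    (hB_half : 1 / 2 ≤ P B) : P A ≤ 2 * P (A ∩ B) := by
  rw [(Indep_iff _ _ _).1 h A B hA hB]
  calc P A = 2 * (P A * (1 / 2)) := by
        rw [mul_comm, mul_assoc, ENNReal.div_mul_cancel two_ne_zero ENNReal.ofNat_ne_top, mul_one]
    _ ≤ 2 * (P A * P B) := by gcongr

section Levy

variable {S : ℕ → Ω → ℝ} {N : ℕ}

lemma measurable_of_le_iSup_comap {k j : ℕ} (hj : j ≤ k) :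
    Measurable[⨆ i ≤ k, MeasurableSpace.comap (S i) inferInstance] (S j) :=
  Measurable.of_comap_le
    (le_iSup₂ (f := fun i (_ : i ≤ k) => MeasurableSpace.comap (S i) _) j hj)

lemma measure_le_two_mul_measure_inter_abs_le {k : ℕ} (hS : ∀ j ≤ N, Measurable (S j))
    (hk : k ≤ N)
    (hindep : Indep (⨆ j ≤ k, MeasurableSpace.comap (S j) inferInstance)
      (MeasurableSpace.comap (S N - S k) inferInstance) P)
    (hpos : 1 / 2 ≤ P {ω | 0 ≤ S N ω - S k ω})
    (hneg : 1 / 2 ≤ P {ω | S N ω - S k ω ≤ 0})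
    {A : Set Ω} (hA : MeasurableSet[⨆ j ≤ k, MeasurableSpace.comap (S j) inferInstance] A) :
    P A ≤ 2 * P (A ∩ {ω | |S k ω| ≤ |S N ω|}) := by
  have hle : (⨆ j ≤ k, MeasurableSpace.comap (S j) inferInstance) ≤ mΩ :=
    iSup₂_le fun j hj => (hS j (hj.trans hk)).comap_le
  set C := {ω | 0 ≤ S k ω}
  have hC : MeasurableSet[⨆ j ≤ k, MeasurableSpace.comap (S j) inferInstance] C :=
    measurableSet_le measurable_const (measurable_of_le_iSup_comap le_rfl)
  have hincr := Measurable.of_comap_le (le_refl (MeasurableSpace.comap (S N - S k) inferInstance))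
  have hup := measure_le_two_mul_measure_inter_of_indep hindep (hA.inter hC)
    (hincr measurableSet_Ici) hpos
  have hdown := measure_le_two_mul_measure_inter_of_indep hindep (hA.diff hC)
    (hincr measurableSet_Iic) hneg
  have hdisj :
      Disjoint (A ∩ C ∩ {ω | 0 ≤ S N ω - S k ω}) (A \ C ∩ {ω | S N ω - S k ω ≤ 0}) :=
    disjoint_left.2 fun ω h1 h2 => h2.1.2 h1.1.2
  have hsub : A ∩ C ∩ {ω | 0 ≤ S N ω - S k ω} ∪ A \ C ∩ {ω | S N ω - S k ω ≤ 0}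
      ⊆ A ∩ {ω | |S k ω| ≤ |S N ω|} := by
    rintro ω (⟨⟨hA, hC⟩, hinc⟩ | ⟨⟨hA, hC⟩, hinc⟩)
    · refine ⟨hA, ?_⟩
      simp only [C, mem_ofPred_eq] at hC hinc ⊢
      rw [abs_of_nonneg hC, abs_of_nonneg (by linarith)]
      linarith
    · refine ⟨hA, ?_⟩
      simp only [C, mem_ofPred_eq, not_le] at hC hinc ⊢
      rw [abs_of_neg hC, abs_of_neg (by linarith)]
      linarith
  calc P A = P (A ∩ C) + P (A \ C) := (measure_inter_add_sdiff A (hle _ hC)).symm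
    _ ≤ 2 * P (A ∩ C ∩ {ω | 0 ≤ S N ω - S k ω})
          + 2 * P (A \ C ∩ {ω | S N ω - S k ω ≤ 0}) :=
      add_le_add hup hdown
    _ = 2 * P (A ∩ C ∩ {ω | 0 ≤ S N ω - S k ω}
          ∪ A \ C ∩ {ω | S N ω - S k ω ≤ 0}) := by
      rw [measure_union hdisj, mul_add]
      exact (hle _ (hA.diff hC)).inter (((hS N le_rfl).sub (hS k hk)) measurableSet_Iic)
    _ ≤ 2 * P (A ∩ {ω | |S k ω| ≤ |S N ω|}) := by gcongr

theorem measure_exists_lt_abs_le_two_mul (hS : ∀ j ≤ N, Measurable (S j))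
    (hindep : ∀ k ≤ N, Indep (⨆ j ≤ k, MeasurableSpace.comap (S j) inferInstance)
      (MeasurableSpace.comap (S N - S k) inferInstance) P)
    (hpos : ∀ k ≤ N, 1 / 2 ≤ P {ω | 0 ≤ S N ω - S k ω})
    (hneg : ∀ k ≤ N, 1 / 2 ≤ P {ω | S N ω - S k ω ≤ 0}) (x : ℝ) :
    P {ω | ∃ k ≤ N, x < |S k ω|} ≤ 2 * P {ω | x < |S N ω|} := by
  set E : ℕ → Set Ω := fun k => {ω | x < |S k ω|}
  set D := disjointed E
  have hE : ∀ k, ∀ j ≤ k,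
      MeasurableSet[⨆ i ≤ k, MeasurableSpace.comap (S i) inferInstance] (E j) :=
    fun k j hj => measurable_of_le_iSup_comap hj (measurableSet_lt measurable_const measurable_abs)
  have hD : ∀ k, MeasurableSet[⨆ i ≤ k, MeasurableSpace.comap (S i) inferInstance] (D k) := by
    intro k
    rw [show D k = _ from disjointed_eq_inter_compl E k]
    exact (hE k k le_rfl).inter
      (MeasurableSet.iInter fun j => MeasurableSet.iInter fun hj => (hE k j hj.le).compl)
  have hD_meas : ∀ k ≤ N, MeasurableSet (D k) :=
    fun k hk => iSup₂_le (fun j hj => (hS j (hj.trans hk)).comap_le) _ (hD k)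
  have hD_disj : (↑(range (N + 1)) : Set ℕ).PairwiseDisjoint D :=
    (disjoint_disjointed E).set_pairwise _
  have hD_inter_disj : (↑(range (N + 1)) : Set ℕ).PairwiseDisjoint
      (fun k => D k ∩ {ω | |S k ω| ≤ |S N ω|}) :=
    hD_disj.mono fun k => inter_subset_left
  have hkN : ∀ k ∈ range (N + 1), k ≤ N :=
    fun k hk => Nat.lt_succ_iff.1 (Finset.mem_range.1 hk)
  have hunion : {ω | ∃ k ≤ N, x < |S k ω|} = ⋃ k ∈ range (N + 1), D k := by
    rw [biUnion_range_succ_disjointed, partialSups_eq_biSup]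
    ext ω
    simp [E]
  calc P {ω | ∃ k ≤ N, x < |S k ω|} = ∑ k ∈ range (N + 1), P (D k) := by
        rw [hunion, measure_biUnion_finset hD_disj fun k hk => hD_meas k (hkN k hk)]
    _ ≤ ∑ k ∈ range (N + 1), 2 * P (D k ∩ {ω | |S k ω| ≤ |S N ω|}) := by
        refine sum_le_sum fun k hk => ?_
        exact measure_le_two_mul_measure_inter_abs_le hS (hkN k hk) (hindep k (hkN k hk))
          (hpos k (hkN k hk)) (hneg k (hkN k hk)) (hD k)
    _ = 2 * P (⋃ k ∈ range (N + 1), D k ∩ {ω | |S k ω| ≤ |S N ω|}) := by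
        rw [← mul_sum, measure_biUnion_finset hD_inter_disj fun k hk =>
          (hD_meas k (hkN k hk)).inter (measurableSet_le (hS k (hkN k hk)).abs (hS N le_rfl).abs)]
    _ ≤ 2 * P {ω | x < |S N ω|} := by
        gcongr
        simp only [iUnion_subset_iff]
        rintro k - ω ⟨hDk, hk⟩
        exact lt_of_lt_of_le (disjointed_subset E k hDk) (show |S k ω| ≤ |S N ω| from hk)

end Levy

theorem ProbabilityTheory.iIndepFun.indep_iSup_comap_partialSum {X : ℕ → Ω → ℝ} {N : ℕ}
    (hX : ∀ i : Fin N, Measurable (X i)) (h : iIndepFun (fun i : Fin N => X i) P) {k : ℕ}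
    (hk : k ≤ N) :
    Indep (⨆ j ≤ k, MeasurableSpace.comap (fun ω => ∑ i ∈ range j, X i ω) inferInstance)
      (MeasurableSpace.comap
        ((fun ω => ∑ i ∈ range N, X i ω) - fun ω => ∑ i ∈ range k, X i ω) inferInstance) P := by
  have hsplit := indep_iSup_of_disjoint (fun i => (hX i).comap_le)
    ((iIndepFun_iff_iIndep _ _ _).1 h) (S := {i : Fin N | (i : ℕ) < k})
    (T := {i | k ≤ (i : ℕ)})
    (disjoint_left.2 fun i (h1 : (i : ℕ) < k) (h2 : k ≤ (i : ℕ)) => absurd h1 (not_lt.2 h2))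
  have hX_meas {s : Set (Fin N)} {i : ℕ} (hi : i < N) (his : (⟨i, hi⟩ : Fin N) ∈ s) :
      Measurable[⨆ i ∈ s, MeasurableSpace.comap (X i) inferInstance] (X i) :=
    Measurable.of_comap_le (le_iSup₂ (f := fun (i : Fin N) _ => MeasurableSpace.comap (X i) _)
      ⟨i, hi⟩ his)
  refine indep_of_indep_of_le_right (indep_of_indep_of_le_left hsplit ?_) ?_
  · refine iSup₂_le fun j hj => Measurable.comap_le ?_
    refine Finset.measurable_sum _ fun i hi => ?_
    have hik : i < k := (Finset.mem_range.1 hi).trans_le hj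
    exact hX_meas (hik.trans_le hk) hik
  · have hIco : ((fun ω => ∑ i ∈ range N, X i ω) - fun ω => ∑ i ∈ range k, X i ω)
        = fun ω => ∑ i ∈ Ico k N, X i ω := by
      ext ω
      simp [sum_Ico_eq_sub _ hk]
    rw [hIco]
    refine Measurable.comap_le (Finset.measurable_sum _ fun i hi => hX_meas (mem_Ico.1 hi).2 ?_)
    exact (mem_Ico.1 hi).1

lemma natCast_div_mem_Icc {k N : ℕ} (hk : k ≤ N) : (k / N : ℝ) ∈ Set.Icc 0 1 :=
  ⟨by positivity, div_le_one_of_le₀ (by exact_mod_cast hk) (Nat.cast_nonneg N)⟩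

lemma monotone_exists_dyadic (p : ℝ → Prop) :
    Monotone fun n : ℕ => ∃ k : ℕ, k ≤ 2 ^ n ∧ p (k / (2 ^ n : ℕ)) := by
  refine monotone_nat_of_le_succ fun n ⟨k, hk, hp⟩ => ⟨2 * k, by omega, ?_⟩
  convert hp using 1
  push_cast
  rw [pow_succ]
  field_simp

lemma lt_iSup_Icc_iff_exists_dyadic {f : ℝ → ℝ} (hf : ContinuousOn f (Set.Icc 0 1)) (x : ℝ) :
    x < ⨆ t : Set.Icc (0 : ℝ) 1, f t ↔
      ∃ n : ℕ, ∃ k : ℕ, k ≤ 2 ^ n ∧ x < f (k / (2 ^ n : ℕ)) := by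
  have hbdd : BddAbove (range fun t : Set.Icc (0 : ℝ) 1 => f t) := by
    rw [← image_eq_range]
    exact isCompact_Icc.bddAbove_image hf
  constructor
  · intro hx
    obtain ⟨⟨s, hs⟩, hxs⟩ := exists_lt_of_lt_ciSup hx
    have hk : ∀ n : ℕ, ⌊s * (2 ^ n : ℕ)⌋₊ ≤ 2 ^ n := fun n =>
      Nat.floor_le_of_le (mul_le_of_le_one_left (Nat.cast_nonneg _) hs.2)
    have hlim : Tendsto (fun n : ℕ => (⌊s * (2 ^ n : ℕ)⌋₊ / (2 ^ n : ℕ) : ℝ)) atTop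
        (𝓝[Set.Icc 0 1] s) := by
      refine tendsto_nhdsWithin_iff.2
        ⟨?_, Eventually.of_forall fun n => natCast_div_mem_Icc (hk n)⟩
      refine (tendsto_nat_floor_mul_div_atTop hs.1).comp ?_
      exact tendsto_natCast_atTop_atTop.comp (tendsto_pow_atTop_atTop_of_one_lt one_lt_two)
    obtain ⟨n, hn⟩ := ((hf s hs).tendsto.comp hlim |>.eventually (lt_mem_nhds hxs)).exists
    exact ⟨n, _, hk n, hn⟩
  · rintro ⟨n, k, hk, hx⟩
    exact hx.trans_le (le_ciSup hbdd ⟨_, natCast_div_mem_Icc hk⟩)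

theorem measure_exists_grid_lt_abs_le_two_mul [IsProbabilityMeasure P] {W : Ω → ℝ → ℝ}
    (h0 : ∀ ω, W ω 0 = 0)
    (hmeas : ∀ t ∈ Set.Icc (0:ℝ) 1, Measurable (fun ω => W ω t))
    (hgauss : ∀ s t : ℝ, 0 ≤ s → s ≤ t → t ≤ 1 →
      Measure.map (fun ω => W ω t - W ω s) P = gaussianReal 0 (Real.toNNReal (t - s)))
    (hindep : ∀ n : ℕ, ∀ t : Fin (n + 1) → ℝ, Monotone t →
      0 ≤ t 0 → t (Fin.last n) ≤ 1 →
      iIndepFun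
        (fun i : Fin n => fun ω => W ω (t i.succ) - W ω (t i.castSucc)) P)
    {N : ℕ} (hN : N ≠ 0) (x : ℝ) :
    P {ω | ∃ k : ℕ, k ≤ N ∧ x < |W ω (k / N)|} ≤ 2 * P {ω | x < |W ω 1|} := by
  set X : ℕ → Ω → ℝ := fun i ω => W ω ((i + 1 : ℕ) / N) - W ω (i / N)
  set S : ℕ → Ω → ℝ := fun j ω => ∑ i ∈ range j, X i ω
  have hS_eq : ∀ j ω, S j ω = W ω (j / N) := fun j ω => by
    simp only [S, X, sum_range_sub (fun i : ℕ => W ω (i / N)), Nat.cast_zero, zero_div, h0,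
      sub_zero]
  have hS_one : ∀ ω, S N ω = W ω 1 := fun ω => by
    rw [hS_eq, div_self (Nat.cast_ne_zero.2 hN)]
  have hSm : ∀ j ≤ N, Measurable (S j) := fun j hj => by
    rw [show S j = _ from funext (hS_eq j)]
    exact hmeas _ (natCast_div_mem_Icc hj)
  have hXm : ∀ i : Fin N, Measurable (X i) := fun i =>
    (hmeas _ (natCast_div_mem_Icc i.isLt)).sub (hmeas _ (natCast_div_mem_Icc i.isLt.le))
  have hXindep : iIndepFun (fun i : Fin N => X i) P := by
    have := hindep N (fun i => (i : ℕ) / N)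
      (fun i j hij => div_le_div_of_nonneg_right (by exact_mod_cast hij) (Nat.cast_nonneg N))
      (by simp) (by simp [hN])
    simpa [X, Fin.val_succ] using this
  have hlaw : ∀ k ≤ N, P.map (fun ω => S N ω - S k ω)
      = gaussianReal 0 (Real.toNNReal (1 - k / N)) := fun k hk => by
    simp only [hS_one, hS_eq]
    exact hgauss _ _ (natCast_div_mem_Icc hk).1 (natCast_div_mem_Icc hk).2 le_rfl
  have hincr : ∀ k ≤ N, Measurable fun ω => S N ω - S k ω := fun k hk =>
    (hSm N le_rfl).sub (hSm k hk)
  have hpos : ∀ k ≤ N, 1 / 2 ≤ P {ω | 0 ≤ S N ω - S k ω} := fun k hk => by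
    have :=
      half_le_measure_Ici_zero_of_map_neg (gaussianReal_zero_map_neg (1 - k / N : ℝ).toNNReal)
    rwa [← hlaw k hk, Measure.map_apply (hincr k hk) measurableSet_Ici] at this
  have hneg : ∀ k ≤ N, 1 / 2 ≤ P {ω | S N ω - S k ω ≤ 0} := fun k hk => by
    have :=
      half_le_measure_Iic_zero_of_map_neg (gaussianReal_zero_map_neg (1 - k / N : ℝ).toNNReal)
    rwa [← hlaw k hk, Measure.map_apply (hincr k hk) measurableSet_Iic] at this
  calc P {ω | ∃ k : ℕ, k ≤ N ∧ x < |W ω (k / N)|}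
        = P {ω | ∃ k ≤ N, x < |S k ω|} := by
        simp only [hS_eq]
    _ ≤ 2 * P {ω | x < |S N ω|} := measure_exists_lt_abs_le_two_mul hSm
        (fun k hk => hXindep.indep_iSup_comap_partialSum hXm hk) hpos hneg x
    _ = 2 * P {ω | x < |W ω 1|} := by simp only [hS_one]

end RandomWalk

/-- For a standard Brownian motion `W` on `[0,1]` (zero at `0`,
continuous paths, Gaussian increments of mean `0` and variance `t - s`, independent
increments), for every `x > 0`:
`P( sup_{t ∈ [0,1]} |W(t)| > x ) ≤ 4 · P( |W(1)| > x/2 )`. -/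
theorem brownian_sup_tail_bound
    {Ω : Type*} [MeasurableSpace Ω] (P : Measure Ω) [IsProbabilityMeasure P]
    (W : Ω → ℝ → ℝ)
    (h0 : ∀ ω, W ω 0 = 0)
    (hcont : ∀ ω, ContinuousOn (W ω) (Set.Icc (0:ℝ) 1))
    (hmeas : ∀ t ∈ Set.Icc (0:ℝ) 1, Measurable (fun ω => W ω t))
    (hgauss : ∀ s t : ℝ, 0 ≤ s → s ≤ t → t ≤ 1 →
      Measure.map (fun ω => W ω t - W ω s) P = gaussianReal 0 (Real.toNNReal (t - s)))
    (hindep : ∀ n : ℕ, ∀ t : Fin (n + 1) → ℝ, Monotone t →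
      0 ≤ t 0 → t (Fin.last n) ≤ 1 →
      iIndepFun
        (fun i : Fin n => fun ω => W ω (t i.succ) - W ω (t i.castSucc)) P) :
    ∀ x : ℝ, 0 < x →
      P {ω | x < ⨆ t : Set.Icc (0:ℝ) 1, |W ω (t : ℝ)|}
        ≤ 4 * P {ω | x / 2 < |W ω 1|} := by
  intro x hx
  set E : ℕ → Set Ω :=
    fun n => {ω | ∃ k : ℕ, k ≤ 2 ^ n ∧ x < |W ω (k / (2 ^ n : ℕ))|}
  have hE_mono : Monotone E := fun m n hmn ω hω =>
    monotone_exists_dyadic (fun t => x < |W ω t|) hmn hω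
  have hsup : {ω | x < ⨆ t : Set.Icc (0:ℝ) 1, |W ω (t : ℝ)|} = ⋃ n, E n := by
    ext ω
    rw [mem_iUnion]
    exact lt_iSup_Icc_iff_exists_dyadic (hcont ω).abs x
  calc P {ω | x < ⨆ t : Set.Icc (0:ℝ) 1, |W ω (t : ℝ)|} = ⨆ n, P (E n) := by
        rw [hsup, hE_mono.measure_iUnion]
    _ ≤ 2 * P {ω | x < |W ω 1|} := iSup_le fun n =>
        measure_exists_grid_lt_abs_le_two_mul h0 hmeas hgauss hindep (pow_ne_zero n two_ne_zero) x
    _ ≤ 2 * P {ω | x / 2 < |W ω 1|} := by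
        gcongr
        linarith
    _ ≤ 4 * P {ω | x / 2 < |W ω 1|} := by gcongr; norm_num
end

section
/- Let E be a separable Banach space and (X_i)_{i ≥ 1} a sequence of i.i.d. random elements of E on a probability space (Ω,F,P). Let α ∈ (0,1) and c > 0. Assume that P(‖X₁‖ > x) > 0 for all x > 0, that the tail of ‖X₁‖ is regularly varying of index −α (i.e., for every λ > 0, P(‖X₁‖ > λx)/P(‖X₁‖ > x) → λ^{−α} as x → ∞), and that (a_n)_{n ≥ 1} is a sequence of positive reals with a_n → ∞ and n·P(‖X₁‖ > a_n) → c as n → ∞. Then for every δ > 0 and T > 0: lim_{ε ↓ 0} limsup_{n → ∞} P( max_{1 ≤ k ≤ ⌊nT⌋} ‖ (1/a_n) Σ_{i=1}^{k} X_i 1_{{‖X_i‖ ≤ a_n ε}} ‖ > δ ) = 0. -/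
/-!
By the triangle inequality and Markov's inequality, the probability in question is at most
`⌊nT⌋ · E[‖X₀‖ 1{‖X₀‖ ≤ u}] / (δ aₙ)` with `u = aₙ ε`, and by the layer-cake formula the truncated
mean is at most `∫₀ᵘ P(‖X₀‖ > t) dt`. Since `α < 1`, regular variation at `1/2` gives the doubling
bound `(x/2) P(‖X₀‖ > x/2) ≤ θ x P(‖X₀‖ > x)` with `θ < 1` for large `x`, and splitting `(0, u]`
dyadically turns this into Karamata's bound `∫₀ᵘ P(‖X₀‖ > t) dt ≤ C u P(‖X₀‖ > u)`. Hence the limsup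
is at most `C T ε / δ · lim n P(‖X₀‖ > ε aₙ) = C c T ε^(1-α) / δ`, which vanishes as `ε ↓ 0`.
-/

open MeasureTheory ProbabilityTheory Filter Set Topology
open scoped ENNReal NNReal

theorem le_induction_halving {x₁ : ℝ} (hx₁ : 0 < x₁) {p : ℝ → Prop}
    (base : ∀ x, x₁ ≤ x → x ≤ 2 * x₁ → p x) (step : ∀ x, 2 * x₁ < x → p (x / 2) → p x) :
    ∀ x, x₁ ≤ x → p x := by
  suffices h : ∀ k : ℕ, ∀ x, x₁ ≤ x → x ≤ 2 ^ k * x₁ → p x by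
    intro x hx
    obtain ⟨k, hk⟩ := pow_unbounded_of_one_lt (x / x₁) one_lt_two
    exact h k x hx ((div_lt_iff₀ hx₁).1 hk).le
  intro k
  induction k with
  | zero => exact fun x h₁ h₂ => base x h₁ (by linarith)
  | succ k ih =>
    intro x h₁ h₂
    rcases le_or_gt x (2 * x₁) with h | h
    · exact base x h₁ h
    · exact step x h (ih _ (by linarith) (by rw [pow_succ] at h₂; linarith))

theorem lintegral_Ioc_le_half_add {q : ℝ → ℝ≥0∞} (hq : Antitone q) (x : ℝ) :
    ∫⁻ t in Ioc 0 x, q t ≤ (∫⁻ t in Ioc 0 (x / 2), q t) + ENNReal.ofReal (x / 2) * q (x / 2) := by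
  calc ∫⁻ t in Ioc 0 x, q t ≤ ∫⁻ t in Ioc 0 (x / 2) ∪ Ioc (x / 2) x, q t :=
        lintegral_mono_set Ioc_subset_Ioc_union_Ioc
    _ ≤ (∫⁻ t in Ioc 0 (x / 2), q t) + ∫⁻ t in Ioc (x / 2) x, q t := lintegral_union_le q _ _
    _ ≤ (∫⁻ t in Ioc 0 (x / 2), q t) + ∫⁻ _ in Ioc (x / 2) x, q (x / 2) := by
        gcongr _ + ?_
        exact setLIntegral_mono' measurableSet_Ioc fun t ht => hq ht.1.le
    _ = (∫⁻ t in Ioc 0 (x / 2), q t) + ENNReal.ofReal (x / 2) * q (x / 2) := by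
        rw [setLIntegral_const, Real.volume_Ioc, mul_comm, sub_half]

theorem lintegral_Ioc_le_of_doubling {q : ℝ → ℝ≥0∞} (hq : Antitone q) {x₁ : ℝ} (hx₁ : 0 < x₁)
    {θ C : ℝ≥0} (hθC : θ * (C + 1) ≤ C)
    (hdub : ∀ x, 2 * x₁ < x →
      ENNReal.ofReal (x / 2) * q (x / 2) ≤ θ * (ENNReal.ofReal x * q x))
    (hbase : ∫⁻ t in Ioc 0 (2 * x₁), q t ≤ C * (ENNReal.ofReal x₁ * q (2 * x₁))) :
    ∀ x, x₁ ≤ x → ∫⁻ t in Ioc 0 x, q t ≤ C * (ENNReal.ofReal x * q x) := by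
  refine le_induction_halving hx₁ (fun x h₁ h₂ => ?_) (fun x hx ih => ?_)
  · calc ∫⁻ t in Ioc 0 x, q t ≤ ∫⁻ t in Ioc 0 (2 * x₁), q t :=
          lintegral_mono_set (Ioc_subset_Ioc le_rfl h₂)
      _ ≤ C * (ENNReal.ofReal x₁ * q (2 * x₁)) := hbase
      _ ≤ C * (ENNReal.ofReal x * q x) := by
          gcongr
          exact hq h₂
  · calc ∫⁻ t in Ioc 0 x, q t
        ≤ (∫⁻ t in Ioc 0 (x / 2), q t) + ENNReal.ofReal (x / 2) * q (x / 2) :=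
          lintegral_Ioc_le_half_add hq x
      _ ≤ (C + 1) * (ENNReal.ofReal (x / 2) * q (x / 2)) := by
          rw [add_mul, one_mul]
          gcongr
      _ ≤ (C + 1) * (θ * (ENNReal.ofReal x * q x)) := by gcongr (_ * ?_); exact hdub x hx
      _ = ((θ * (C + 1) : ℝ≥0) : ℝ≥0∞) * (ENNReal.ofReal x * q x) := by push_cast; ring
      _ ≤ C * (ENNReal.ofReal x * q x) := by gcongr

theorem exists_lintegral_Ioc_le_of_doubling {q : ℝ → ℝ≥0∞} (hq : Antitone q) (hq₀ : q 0 ≠ ∞)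
    (hpos : ∀ x, 0 < x → q x ≠ 0) {θ : ℝ≥0} (hθ : θ < 1)
    (hdub : ∀ᶠ x in atTop, ENNReal.ofReal (x / 2) * q (x / 2) ≤ θ * (ENNReal.ofReal x * q x)) :
    ∃ C : ℝ≥0, ∀ᶠ x in atTop, ∫⁻ t in Ioc 0 x, q t ≤ C * (ENNReal.ofReal x * q x) := by
  obtain ⟨x₀, hx₀⟩ := eventually_atTop.1 hdub
  set x₁ := max x₀ 1
  have hx₁ : 0 < x₁ := zero_lt_one.trans_le (le_max_right _ _)
  set m := ENNReal.ofReal x₁ * q (2 * x₁)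
  have hm₀ : m ≠ 0 := mul_ne_zero (by simpa using hx₁) (hpos _ (by positivity))
  have hm_top : m ≠ ∞ :=
    ENNReal.mul_ne_top ENNReal.ofReal_ne_top (ne_top_of_le_ne_top hq₀ (hq (by positivity)))
  have hH : ∫⁻ t in Ioc 0 (2 * x₁), q t ≠ ∞ := by
    refine ne_top_of_le_ne_top ?_ (setLIntegral_mono' measurableSet_Ioc fun t ht => hq ht.1.le)
    rw [setLIntegral_const]
    exact ENNReal.mul_ne_top hq₀ measure_Ioc_lt_top.ne
  -- `θ / (1 - θ) ≤ C` is exactly what closes the induction step `θ (C + 1) ≤ C`.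
  set C : ℝ≥0 := max ((∫⁻ t in Ioc 0 (2 * x₁), q t) / m).toNNReal (θ / (1 - θ))
  refine ⟨C, eventually_atTop.2 ⟨x₁, lintegral_Ioc_le_of_doubling hq hx₁ ?_
    (fun x hx => hx₀ x (by linarith [le_max_left x₀ 1])) ?_⟩⟩
  · have h : θ ≤ C * (1 - θ) := (div_le_iff₀ (tsub_pos_of_lt hθ)).1 (le_max_right _ _)
    calc θ * (C + 1) = θ * C + θ := by ring
      _ ≤ θ * C + C * (1 - θ) := by gcongr
      _ = C * (θ + (1 - θ)) := by ring
      _ = C := by rw [add_tsub_cancel_of_le hθ.le, mul_one]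
  · calc ∫⁻ t in Ioc 0 (2 * x₁), q t = (∫⁻ t in Ioc 0 (2 * x₁), q t) / m * m :=
          (ENNReal.div_mul_cancel hm₀ hm_top).symm
      _ = ((∫⁻ t in Ioc 0 (2 * x₁), q t) / m).toNNReal * m := by
          rw [ENNReal.coe_toNNReal (ENNReal.div_ne_top hH hm₀)]
      _ ≤ C * m := by gcongr; exact le_max_left _ _

theorem exists_lt_one_eventually_half_mul_le {q : ℝ → ℝ≥0∞} (hq : ∀ x, q x ≠ ∞)
    (hpos : ∀ x, 0 < x → q x ≠ 0) {L : ℝ}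
    (hlim : Tendsto (fun x => (q (2⁻¹ * x)).toReal / (q x).toReal) atTop (𝓝 L)) (hL : L < 2) :
    ∃ θ : ℝ≥0, θ < 1 ∧
      ∀ᶠ x in atTop, ENNReal.ofReal (x / 2) * q (x / 2) ≤ θ * (ENNReal.ofReal x * q x) := by
  obtain ⟨K, hLK, hK2⟩ := exists_between (max_lt hL two_pos)
  have hK₀ : 0 ≤ K := (le_max_right L 0).trans hLK.le
  refine ⟨(K / 2).toNNReal, Real.toNNReal_lt_one.2 (by linarith), ?_⟩
  filter_upwards [hlim.eventually (gt_mem_nhds ((le_max_left L 0).trans_lt hLK)),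
    eventually_gt_atTop 0] with x hx hx₀
  have hhalf : q (x / 2) ≤ ENNReal.ofReal K * q x := by
    rw [← ENNReal.ofReal_toReal (hq (x / 2)), ← ENNReal.ofReal_toReal (hq x),
      ← ENNReal.ofReal_mul hK₀, div_eq_inv_mul]
    refine ENNReal.ofReal_le_ofReal ((div_lt_iff₀ ?_).1 hx).le
    exact ENNReal.toReal_pos (hpos x hx₀) (hq x)
  calc ENNReal.ofReal (x / 2) * q (x / 2) ≤ ENNReal.ofReal (x / 2) * (ENNReal.ofReal K * q x) := by
        gcongr
    _ = ENNReal.ofReal (K / 2) * (ENNReal.ofReal x * q x) := by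
        rw [← mul_assoc, ← mul_assoc, ← ENNReal.ofReal_mul (by positivity),
          ← ENNReal.ofReal_mul (by positivity)]
        ring_nf

theorem lintegral_truncation_le_lintegral_meas_lt {Ω : Type*} [MeasurableSpace Ω]
    (μ : Measure Ω) {g : Ω → ℝ} (hg : AEMeasurable g μ) (hg₀ : ∀ ω, 0 ≤ g ω) (u : ℝ) :
    ∫⁻ ω, ENNReal.ofReal (if g ω ≤ u then g ω else 0) ∂μ ≤ ∫⁻ t in Ioc 0 u, μ {ω | t < g ω} := by
  set f : Ω → ℝ := fun ω => if g ω ≤ u then g ω else 0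
  have hf : AEMeasurable f μ :=
    (measurable_id.ite measurableSet_Iic measurable_const).comp_aemeasurable hg
  have hf₀ : ∀ ω, 0 ≤ f ω := fun ω => by dsimp only [f]; split_ifs <;> simp [hg₀ ω]
  rw [lintegral_eq_lintegral_meas_lt μ (ae_of_all _ hf₀) hf, ← Iic_inter_Ioi,
    ← Measure.restrict_restrict measurableSet_Iic, ← lintegral_indicator measurableSet_Iic]
  refine setLIntegral_mono' measurableSet_Ioi fun t (ht : 0 < t) => ?_
  by_cases htu : t ≤ u
  · rw [indicator_of_mem (show t ∈ Iic u from htu)]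
    refine measure_mono fun ω (hω : t < f ω) => show t < g ω from ?_
    dsimp only [f] at hω
    split_ifs at hω <;> linarith [hg₀ ω]
  · have hempty : {ω | t < f ω} = ∅ := by
      refine eq_empty_of_forall_notMem fun ω (hω : t < f ω) => ?_
      dsimp only [f] at hω
      split_ifs at hω <;> linarith
    simp [hempty]

theorem measure_exists_norm_smul_sum_range_gt_le {Ω E : Type*} [MeasurableSpace Ω]
    [NormedAddCommGroup E] [NormedSpace ℝ E] [MeasurableSpace E] [OpensMeasurableSpace E]
    (μ : Measure Ω) {Z : ℕ → Ω → E} (hZ : ∀ i, AEMeasurable (Z i) μ) (m : ℕ) {a δ : ℝ}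
    (ha : 0 < a) (hδ : 0 < δ) :
    μ {ω | ∃ k ≤ m, δ < ‖a⁻¹ • ∑ i ∈ Finset.range k, Z i ω‖} ≤
      (∑ i ∈ Finset.range m, ∫⁻ ω, ‖Z i ω‖ₑ ∂μ) / ENNReal.ofReal (δ * a) := by
  have hsub : {ω | ∃ k ≤ m, δ < ‖a⁻¹ • ∑ i ∈ Finset.range k, Z i ω‖} ⊆
      {ω | ENNReal.ofReal (δ * a) ≤ ∑ i ∈ Finset.range m, ‖Z i ω‖ₑ} := by
    rintro ω ⟨k, hkm, hk⟩
    rw [norm_smul, norm_inv, Real.norm_of_nonneg ha.le, inv_mul_eq_div, lt_div_iff₀ ha] at hk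
    calc ENNReal.ofReal (δ * a) ≤ ‖∑ i ∈ Finset.range k, Z i ω‖ₑ := by
          rw [← ofReal_norm]; exact ENNReal.ofReal_le_ofReal hk.le
      _ ≤ ∑ i ∈ Finset.range k, ‖Z i ω‖ₑ := enorm_sum_le _ _
      _ ≤ ∑ i ∈ Finset.range m, ‖Z i ω‖ₑ :=
          Finset.sum_le_sum_of_subset (Finset.range_subset_range.2 hkm)
  have hZe : ∀ i ∈ Finset.range m, AEMeasurable (fun ω => ‖Z i ω‖ₑ) μ := fun i _ => (hZ i).enorm
  calc μ {ω | ∃ k ≤ m, δ < ‖a⁻¹ • ∑ i ∈ Finset.range k, Z i ω‖}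
      ≤ (∫⁻ ω, ∑ i ∈ Finset.range m, ‖Z i ω‖ₑ ∂μ) / ENNReal.ofReal (δ * a) :=
        (measure_mono hsub).trans <| meas_ge_le_lintegral_div
          (Finset.aemeasurable_fun_sum _ hZe)
          (by simpa using mul_pos hδ ha) ENNReal.ofReal_ne_top
    _ = (∑ i ∈ Finset.range m, ∫⁻ ω, ‖Z i ω‖ₑ ∂μ) / ENNReal.ofReal (δ * a) := by
        rw [lintegral_finsetSum' _ hZe]

theorem measure_exists_norm_smul_sum_truncated_gt_le {Ω E : Type*} [MeasurableSpace Ω]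
    [NormedAddCommGroup E] [NormedSpace ℝ E] [MeasurableSpace E] [BorelSpace E]
    (μ : Measure Ω) {X : ℕ → Ω → E} (hX : ∀ i, IdentDistrib (X i) (X 0) μ μ) (m : ℕ)
    {a δ : ℝ} (ha : 0 < a) (hδ : 0 < δ) (u : ℝ) :
    μ {ω | ∃ k ≤ m, δ < ‖a⁻¹ • ∑ i ∈ Finset.range k, if ‖X i ω‖ ≤ u then X i ω else 0‖} ≤
      m * (∫⁻ t in Ioc 0 u, μ {ω | t < ‖X 0 ω‖}) / ENNReal.ofReal (δ * a) := by
  set φ : E → E := fun y => if ‖y‖ ≤ u then y else 0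
  have hφ : Measurable φ := measurable_id.ite (measurableSet_le measurable_norm measurable_const)
    measurable_const
  have hφX : ∀ i, ∫⁻ ω, ‖φ (X i ω)‖ₑ ∂μ = ∫⁻ ω, ‖φ (X 0 ω)‖ₑ ∂μ := fun i =>
    ((hX i).comp hφ.enorm).lintegral_eq
  have hφX₀ : ∫⁻ ω, ‖φ (X 0 ω)‖ₑ ∂μ ≤ ∫⁻ t in Ioc 0 u, μ {ω | t < ‖X 0 ω‖} := by
    refine le_of_eq_of_le (lintegral_congr fun ω => ?_)
      (lintegral_truncation_le_lintegral_meas_lt μ (hX 0).aemeasurable_snd.norm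
        (fun ω => norm_nonneg _) u)
    dsimp only [φ]
    split_ifs <;> simp
  calc _ ≤ (∑ i ∈ Finset.range m, ∫⁻ ω, ‖φ (X i ω)‖ₑ ∂μ) / ENNReal.ofReal (δ * a) :=
        measure_exists_norm_smul_sum_range_gt_le μ
          (fun i => hφ.comp_aemeasurable (hX i).aemeasurable_fst) m ha hδ
    _ ≤ _ := by
        simp only [hφX, Finset.sum_const, Finset.card_range, nsmul_eq_mul]
        gcongr

theorem Filter.Tendsto.natCast_mul_comp_const_mul {f : ℝ → ℝ} {a : ℕ → ℝ} {c s L : ℝ}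
    (hc : Tendsto (fun n : ℕ => n * f (a n)) atTop (𝓝 c)) (ha : Tendsto a atTop atTop)
    (hs : Tendsto (fun x => f (s * x) / f x) atTop (𝓝 L)) (hf : ∀ n, f (a n) ≠ 0) :
    Tendsto (fun n : ℕ => n * f (s * a n)) atTop (𝓝 (c * L)) :=
  (hc.mul (hs.comp ha)).congr fun n => by
    simp only [Function.comp_apply]
    field_simp [hf n]

theorem tendsto_mul_rpow_neg_nhdsGT_zero {α : ℝ} (hα : α < 1) :
    Tendsto (fun ε : ℝ => ε * ε ^ (-α)) (𝓝[>] 0) (𝓝 0) := by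
  have h : Tendsto (fun ε : ℝ => ε ^ (1 - α)) (𝓝[>] 0) (𝓝 0) := by
    have := (Real.continuousAt_rpow_const 0 (1 - α) (Or.inr (by linarith))).tendsto
    rw [Real.zero_rpow (by linarith)] at this
    exact this.mono_left nhdsWithin_le_nhds
  refine h.congr' (eventually_mem_nhdsWithin.mono fun ε (hε : 0 < ε) => ?_)
  rw [sub_eq_add_neg, Real.rpow_add hε, Real.rpow_one]

theorem limsup_measure_exists_norm_smul_sum_truncated_gt_le {Ω E : Type*} [MeasurableSpace Ω]
    [NormedAddCommGroup E] [NormedSpace ℝ E] [MeasurableSpace E] [BorelSpace E]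
    (P : Measure Ω) [IsFiniteMeasure P] {X : ℕ → Ω → E} (hX : ∀ i, IdentDistrib (X i) (X 0) P P)
    {C : ℝ≥0} (hC : ∀ᶠ u in atTop, ∫⁻ t in Ioc 0 u, P {ω | t < ‖X 0 ω‖} ≤
      C * (ENNReal.ofReal u * P {ω | u < ‖X 0 ω‖}))
    {a : ℕ → ℝ} (ha_pos : ∀ n, 0 < a n) (ha_inf : Tendsto a atTop atTop) {ε L : ℝ} (hε : 0 < ε)
    (hL : Tendsto (fun n : ℕ => n * (P {ω | ε * a n < ‖X 0 ω‖}).toReal) atTop (𝓝 L))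
    {δ T : ℝ} (hδ : 0 < δ) (hT : 0 ≤ T) :
    limsup (fun n : ℕ => P {ω | ∃ k : ℕ, 1 ≤ k ∧ k ≤ ⌊(n : ℝ) * T⌋₊ ∧
      δ < ‖(a n)⁻¹ • ∑ i ∈ Finset.range k, if ‖X i ω‖ ≤ a n * ε then X i ω else 0‖}) atTop ≤
      C * ENNReal.ofReal (T * ε / δ * L) := by
  have hbound : ∀ᶠ n : ℕ in atTop, P {ω | ∃ k : ℕ, 1 ≤ k ∧ k ≤ ⌊(n : ℝ) * T⌋₊ ∧
      δ < ‖(a n)⁻¹ • ∑ i ∈ Finset.range k, if ‖X i ω‖ ≤ a n * ε then X i ω else 0‖} ≤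
      C * ENNReal.ofReal (T * ε / δ * (n * (P {ω | ε * a n < ‖X 0 ω‖}).toReal)) := by
    filter_upwards [(tendsto_id.const_mul_atTop hε).comp ha_inf |>.eventually hC] with n hn
    simp only [Function.comp_apply, id] at hn
    set p := P {ω | ε * a n < ‖X 0 ω‖}
    have hp : p = ENNReal.ofReal p.toReal := (ENNReal.ofReal_toReal (measure_ne_top P _)).symm
    have hfloor : (⌊(n : ℝ) * T⌋₊ : ℝ≥0∞) ≤ ENNReal.ofReal (n * T) := by
      rw [← ENNReal.ofReal_natCast]
      exact ENNReal.ofReal_le_ofReal (Nat.floor_le (by positivity))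
    have han := ha_pos n
    calc P {ω | ∃ k : ℕ, 1 ≤ k ∧ k ≤ ⌊(n : ℝ) * T⌋₊ ∧
          δ < ‖(a n)⁻¹ • ∑ i ∈ Finset.range k, if ‖X i ω‖ ≤ a n * ε then X i ω else 0‖}
        ≤ P {ω | ∃ k ≤ ⌊(n : ℝ) * T⌋₊,
          δ < ‖(a n)⁻¹ • ∑ i ∈ Finset.range k, if ‖X i ω‖ ≤ a n * ε then X i ω else 0‖} :=
          measure_mono fun ω ⟨k, _, hkm, hk⟩ => ⟨k, hkm, hk⟩
      _ ≤ ⌊(n : ℝ) * T⌋₊ * (∫⁻ t in Ioc 0 (ε * a n), P {ω | t < ‖X 0 ω‖}) /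
            ENNReal.ofReal (δ * a n) := by
          rw [mul_comm ε (a n)]
          exact measure_exists_norm_smul_sum_truncated_gt_le P hX _ han hδ _
      _ ≤ ENNReal.ofReal (n * T) * (C * (ENNReal.ofReal (ε * a n) * ENNReal.ofReal p.toReal)) /
            ENNReal.ofReal (δ * a n) := by
          rw [← hp]
          gcongr
      _ = C * ENNReal.ofReal (T * ε / δ * (n * p.toReal)) := by
          rw [mul_left_comm, mul_div_assoc, ← ENNReal.ofReal_mul (by positivity),
            ← ENNReal.ofReal_mul (by positivity), ← ENNReal.ofReal_div_of_pos (mul_pos hδ han)]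
          congr 2
          field_simp
  calc _ ≤ limsup (fun n : ℕ =>
        C * ENNReal.ofReal (T * ε / δ * (n * (P {ω | ε * a n < ‖X 0 ω‖}).toReal))) atTop :=
        limsup_le_limsup hbound
    _ = C * ENNReal.ofReal (T * ε / δ * L) :=
        (ENNReal.Tendsto.const_mul (ENNReal.tendsto_ofReal (hL.const_mul _))
          (Or.inr ENNReal.coe_ne_top)).limsup_eq

theorem small_jumps_negligible_alpha_lt_one_general
    {E : Type*} [NormedAddCommGroup E] [NormedSpace ℝ E]
    [MeasurableSpace E] [BorelSpace E]
    {Ω : Type*} [MeasurableSpace Ω] (P : Measure Ω) [IsProbabilityMeasure P]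
    (X : ℕ → Ω → E) (hXmeas : ∀ i, Measurable (X i))
    (hXident : ∀ i, Measure.map (X i) P = Measure.map (X 0) P)
    (α : ℝ) (hα1 : α < 1) (c : ℝ)
    (htail_pos : ∀ x : ℝ, 0 < x → 0 < P {ω | x < ‖X 0 ω‖})
    (hRV : ∀ l : ℝ, 0 < l →
      Tendsto (fun x : ℝ =>
          (P {ω | l * x < ‖X 0 ω‖}).toReal / (P {ω | x < ‖X 0 ω‖}).toReal)
        atTop (nhds (l ^ (-α))))
    (a : ℕ → ℝ) (ha_pos : ∀ n, 0 < a n) (ha_inf : Tendsto a atTop atTop)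
    (ha_c : Tendsto (fun n : ℕ => (n : ℝ) * (P {ω | a n < ‖X 0 ω‖}).toReal)
      atTop (nhds c)) :
    ∀ δ : ℝ, 0 < δ → ∀ T : ℝ, 0 < T →
      Tendsto (fun ε : ℝ =>
          Filter.limsup (fun n : ℕ =>
            P {ω | ∃ k : ℕ, 1 ≤ k ∧ k ≤ Nat.floor ((n : ℝ) * T) ∧
              δ < ‖(a n)⁻¹ • ∑ i ∈ Finset.range k,
                (if ‖X i ω‖ ≤ a n * ε then X i ω else 0)‖}) atTop)
        (nhdsWithin 0 (Set.Ioi 0)) (nhds 0) := by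
  intro δ hδ T hT
  have hX : ∀ i, IdentDistrib (X i) (X 0) P P := fun i =>
    ⟨(hXmeas i).aemeasurable, (hXmeas 0).aemeasurable, hXident i⟩
  have htail_ne : ∀ x : ℝ, 0 < x → P {ω | x < ‖X 0 ω‖} ≠ 0 := fun x hx => (htail_pos x hx).ne'
  have hhalf : (2⁻¹ : ℝ) ^ (-α) < 2 := by
    rw [Real.inv_rpow zero_le_two, Real.rpow_neg zero_le_two, inv_inv]
    simpa using Real.rpow_lt_rpow_of_exponent_lt one_lt_two hα1
  obtain ⟨θ, hθ, hdub⟩ := exists_lt_one_eventually_half_mul_le (fun x => measure_ne_top P _)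
    htail_ne (hRV 2⁻¹ (by norm_num)) hhalf
  obtain ⟨C, hC⟩ := exists_lintegral_Ioc_le_of_doubling
    (fun s t hst => measure_mono fun ω (hω : t < ‖X 0 ω‖) => hst.trans_lt hω)
    (measure_ne_top P _) htail_ne hθ hdub
  have hlim : Tendsto (fun ε : ℝ => T * ε / δ * (c * ε ^ (-α))) (𝓝[>] 0) (𝓝 0) := by
    simpa only [mul_zero] using ((tendsto_mul_rpow_neg_nhdsGT_zero hα1).const_mul
      (T * c / δ)).congr fun ε => by ring
  have hlimC := ENNReal.Tendsto.const_mul (ENNReal.tendsto_ofReal hlim)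
    (Or.inr (ENNReal.coe_ne_top (r := C)))
  rw [ENNReal.ofReal_zero, mul_zero] at hlimC
  refine tendsto_of_tendsto_of_tendsto_of_le_of_le' tendsto_const_nhds hlimC
    (Eventually.of_forall fun _ => zero_le) (eventually_mem_nhdsWithin.mono fun ε hε => ?_)
  exact limsup_measure_exists_norm_smul_sum_truncated_gt_le P hX hC ha_pos ha_inf hε
    (ha_c.natCast_mul_comp_const_mul (f := fun x => (P {ω | x < ‖X 0 ω‖}).toReal) ha_inf
      (hRV ε hε) fun n => (ENNReal.toReal_pos (htail_ne _ (ha_pos n)) (measure_ne_top P _)).ne')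
    hδ hT.le

/-- Let `(Xᵢ)` be i.i.d. random elements of a separable Banach space `E`
whose norm has a regularly varying tail of index `-α` with `α ∈ (0,1)`, and let
`(aₙ)` satisfy `aₙ → ∞` and `n P(‖X₁‖ > aₙ) → c`. Then the small-jump sums are
asymptotically negligible: for all `δ, T > 0`,
`lim_{ε↓0} limsup_n P( max_{1 ≤ k ≤ ⌊nT⌋} ‖ aₙ⁻¹ Σ_{i=1}^k Xᵢ 1{‖Xᵢ‖ ≤ aₙ ε} ‖ > δ ) = 0`. -/
theorem small_jumps_negligible_alpha_lt_one
    {E : Type*} [NormedAddCommGroup E] [NormedSpace ℝ E] [CompleteSpace E]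
    [TopologicalSpace.SeparableSpace E] [MeasurableSpace E] [BorelSpace E]
    {Ω : Type*} [MeasurableSpace Ω] (P : Measure Ω) [IsProbabilityMeasure P]
    (X : ℕ → Ω → E) (hXmeas : ∀ i, Measurable (X i))
    (hXindep : iIndepFun X P)
    (hXident : ∀ i, Measure.map (X i) P = Measure.map (X 0) P)
    (α : ℝ) (hα0 : 0 < α) (hα1 : α < 1) (c : ℝ) (hc : 0 < c)
    (htail_pos : ∀ x : ℝ, 0 < x → 0 < P {ω | x < ‖X 0 ω‖})
    (hRV : ∀ l : ℝ, 0 < l →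
      Tendsto (fun x : ℝ =>
          (P {ω | l * x < ‖X 0 ω‖}).toReal / (P {ω | x < ‖X 0 ω‖}).toReal)
        atTop (nhds (l ^ (-α))))
    (a : ℕ → ℝ) (ha_pos : ∀ n, 0 < a n) (ha_inf : Tendsto a atTop atTop)
    (ha_c : Tendsto (fun n : ℕ => (n : ℝ) * (P {ω | a n < ‖X 0 ω‖}).toReal)
      atTop (nhds c)) :
    ∀ δ : ℝ, 0 < δ → ∀ T : ℝ, 0 < T →
      Tendsto (fun ε : ℝ =>
          Filter.limsup (fun n : ℕ =>
            P {ω | ∃ k : ℕ, 1 ≤ k ∧ k ≤ Nat.floor ((n : ℝ) * T) ∧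
              δ < ‖(a n)⁻¹ • ∑ i ∈ Finset.range k,
                (if ‖X i ω‖ ≤ a n * ε then X i ω else 0)‖}) atTop)
        (nhdsWithin 0 (Set.Ioi 0)) (nhds 0) :=
  small_jumps_negligible_alpha_lt_one_general P X hXmeas hXident α hα1 c htail_pos hRV a ha_pos
    ha_inf ha_c
end

section
/- Let E be a separable Banach space and (X_i)_{i ≥ 1} a sequence of independent random elements of E on a probability space (Ω,F,P), each X_i being Bochner integrable on bounded truncations. Let (a_n)_{n ≥ 1} be positive reals. Assume condition (AN): for every δ > 0 and T > 0, lim_{ε ↓ 0} limsup_{n → ∞} max_{1 ≤ k ≤ ⌊nT⌋} P( ‖ Σ_{i=1}^{k} ( X_i 1_{{‖X_i‖ ≤ a_n ε}} − E[ X_i 1_{{‖X_i‖ ≤ a_n ε}} ] ) ‖ > a_n δ ) = 0. Then the corresponding maximal version holds: for every δ > 0 and T > 0, lim_{ε ↓ 0} limsup_{n → ∞} P( max_{1 ≤ k ≤ ⌊nT⌋} ‖ Σ_{i=1}^{k} ( X_i 1_{{‖X_i‖ ≤ a_n ε}} − E[ X_i 1_{{‖X_i‖ ≤ a_n ε}}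 ] ) ‖ > a_n δ ) = 0. -/
/-!
Etemadi's maximal inequality: for independent summands and `3 t ≤ u`,
`P (max_{1 ≤ k ≤ N} ‖S_k‖ > u) ≤ 3 max_{1 ≤ k ≤ N} P (‖S_k‖ > t)`.
Split the maximal event according to the first time `k` at which `‖S_k‖ > u`. On that event
either `‖S_N‖ > t`, or `‖S_N - S_k‖ > 2 t`; the latter is independent of the first-passage event
and has probability at most `2 max_k P (‖S_k‖ > t)`. Applied to the truncated, centred summands
with `t = aₙ δ / 3`, the inequality bounds the maximal probabilities by three times those of (AN).
-/

open MeasureTheory ProbabilityTheory Filter Set Topology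

open scoped ENNReal

namespace ProbabilityTheory

section FirstPassage

variable {Ω E : Type*} [NormedAddCommGroup E]

def partialSum (Y : ℕ → Ω → E) (k : ℕ) (ω : Ω) : E :=
  ∑ i ∈ Finset.range k, Y i ω

lemma partialSum_sub_partialSum {Y : ℕ → Ω → E} {k N : ℕ} (hkN : k ≤ N) (ω : Ω) :
    partialSum Y N ω - partialSum Y k ω = ∑ i ∈ Finset.Ico k N, Y i ω :=
  (Finset.sum_Ico_eq_sub _ hkN).symm

def firstPassage (S : ℕ → Ω → E) (u : ℝ) (k : ℕ) : Set Ω :=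
  {ω | (∀ j ∈ Finset.Ico 1 k, ‖S j ω‖ ≤ u) ∧ u < ‖S k ω‖}

lemma pairwiseDisjoint_firstPassage (S : ℕ → Ω → E) (u : ℝ) :
    (Ici 1).PairwiseDisjoint (firstPassage S u) := by
  intro k hk l hl hkl
  rcases hkl.lt_or_gt with h | h
  · exact disjoint_left.mpr fun ω hωk hωl =>
      (hωl.1 k (Finset.mem_Ico.mpr ⟨hk, h⟩)).not_gt hωk.2
  · exact disjoint_left.mpr fun ω hωk hωl =>
      (hωk.1 l (Finset.mem_Ico.mpr ⟨hl, h⟩)).not_gt hωl.2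

lemma setOf_exists_lt_norm_eq_biUnion_firstPassage (S : ℕ → Ω → E) (u : ℝ) (N : ℕ) :
    {ω | ∃ k, 1 ≤ k ∧ k ≤ N ∧ u < ‖S k ω‖} = ⋃ k ∈ Finset.Icc 1 N, firstPassage S u k := by
  classical
  ext ω
  simp only [mem_ofPred_eq, mem_iUnion, Finset.mem_Icc, exists_prop]
  constructor
  · intro h
    obtain ⟨hk1, hkN, hk⟩ := Nat.find_spec h
    refine ⟨Nat.find h, ⟨hk1, hkN⟩, fun j hj => ?_, hk⟩
    rw [Finset.mem_Ico] at hj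
    exact not_lt.mp fun hlt => Nat.find_min h hj.2 ⟨hj.1, hj.2.le.trans hkN, hlt⟩
  · rintro ⟨k, ⟨hk1, hkN⟩, -, hk⟩
    exact ⟨k, hk1, hkN, hk⟩

lemma setOf_two_mul_lt_norm_sub_subset (f g : Ω → E) (t : ℝ) :
    {ω | 2 * t < ‖f ω - g ω‖} ⊆ {ω | t < ‖f ω‖} ∪ {ω | t < ‖g ω‖} := by
  intro ω hω
  by_contra! h
  simp only [mem_union, mem_ofPred_eq, not_or, not_lt] at h
  linarith [norm_sub_le (f ω) (g ω), hω.out]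

lemma firstPassage_subset_union (S : ℕ → Ω → E) {t u : ℝ} (htu : 3 * t ≤ u) (k N : ℕ) :
    firstPassage S u k ⊆ {ω | t < ‖S N ω‖} ∪ {ω | 2 * t < ‖S N ω - S k ω‖} := by
  intro ω hω
  by_contra! h
  simp only [mem_union, mem_ofPred_eq, not_or, not_lt] at h
  linarith [norm_sub_norm_le (S k ω) (S N ω), norm_sub_rev (S k ω) (S N ω), hω.2]

variable [MeasurableSpace E] [OpensMeasurableSpace E]

lemma measurableSet_firstPassage {m : MeasurableSpace Ω} {S : ℕ → Ω → E} {k : ℕ}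
    (hS : ∀ j ≤ k, Measurable[m] (S j)) (u : ℝ) : MeasurableSet[m] (firstPassage S u k) := by
  have : firstPassage S u k =
      (⋂ j ∈ Finset.Ico 1 k, {ω | ‖S j ω‖ ≤ u}) ∩ {ω | u < ‖S k ω‖} := by
    ext ω
    simp [firstPassage]
  rw [this]
  exact (Finset.measurableSet_biInter _ fun j hj =>
      measurableSet_le (hS j (Finset.mem_Ico.mp hj).2.le).norm measurable_const).inter
    (measurableSet_lt measurable_const (hS k le_rfl).norm)

end FirstPassage

lemma measurable_biSup_comap {Ω ι β : Type*} [mβ : MeasurableSpace β] (Y : ι → Ω → β)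
    {s : Set ι} {i : ι} (hi : i ∈ s) : Measurable[⨆ j ∈ s, mβ.comap (Y j)] (Y i) :=
  Measurable.of_comap_le (le_iSup₂ (f := fun j (_ : j ∈ s) => mβ.comap (Y j)) i hi)

lemma measurable_partialSum {Ω E : Type*} {m : MeasurableSpace Ω} [NormedAddCommGroup E]
    [MeasurableSpace E] [BorelSpace E] [SecondCountableTopology E] {Y : ℕ → Ω → E} {k : ℕ}
    (hY : ∀ i < k, Measurable[m] (Y i)) : Measurable[m] (partialSum Y k) :=
  Finset.measurable_sum _ fun i hi => hY i (Finset.mem_range.mp hi)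

section Etemadi

variable {Ω E : Type*} [MeasurableSpace Ω] [NormedAddCommGroup E] [MeasurableSpace E]
  [BorelSpace E] [SecondCountableTopology E] {P : Measure Ω} {Y : ℕ → Ω → E}

lemma iIndepFun.measure_firstPassage_inter_eq_mul (hY : ∀ i, Measurable (Y i))
    (hind : iIndepFun Y P) {k N : ℕ} (hkN : k ≤ N) (u r : ℝ) :
    P (firstPassage (partialSum Y) u k ∩ {ω | r < ‖partialSum Y N ω - partialSum Y k ω‖}) =
      P (firstPassage (partialSum Y) u k) *
        P {ω | r < ‖partialSum Y N ω - partialSum Y k ω‖} := by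
  have hindep : Indep (⨆ i ∈ Iio k, MeasurableSpace.comap (Y i) inferInstance)
      (⨆ i ∈ Ico k N, MeasurableSpace.comap (Y i) inferInstance) P :=
    indep_iSup_of_disjoint (fun i => (hY i).comap_le) hind
      ((Iio_disjoint_Ici le_rfl).mono_right Ico_subset_Ici_self)
  refine (Indep_iff _ _ P).mp hindep _ _ ?_ ?_
  · exact measurableSet_firstPassage (fun j hj => measurable_partialSum fun i hi =>
      measurable_biSup_comap Y (mem_Iio.mpr (hi.trans_le hj))) u
  · simp_rw [partialSum_sub_partialSum hkN]
    exact measurable_norm.comp (Finset.measurable_sum _ fun i hi =>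
      measurable_biSup_comap Y (Finset.mem_Ico.mp hi)) measurableSet_Ioi

lemma iIndepFun.measure_firstPassage_le (hY : ∀ i, Measurable (Y i)) (hind : iIndepFun Y P)
    {t u : ℝ} {M : ℝ≥0∞} {k N : ℕ} (htu : 3 * t ≤ u) (hk : k ∈ Finset.Icc 1 N)
    (hM : ∀ j ∈ Finset.Icc 1 N, P {ω | t < ‖partialSum Y j ω‖} ≤ M) :
    P (firstPassage (partialSum Y) u k) ≤
      P (firstPassage (partialSum Y) u k ∩ {ω | t < ‖partialSum Y N ω‖}) +
        P (firstPassage (partialSum Y) u k) * (2 * M) := by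
  set B := firstPassage (partialSum Y) u k
  set D := {ω | 2 * t < ‖partialSum Y N ω - partialSum Y k ω‖}
  obtain ⟨hk1, hkN⟩ := Finset.mem_Icc.mp hk
  have hD : P D ≤ 2 * M := calc
    P D ≤ P ({ω | t < ‖partialSum Y N ω‖} ∪ {ω | t < ‖partialSum Y k ω‖}) :=
      measure_mono (setOf_two_mul_lt_norm_sub_subset _ _ t)
    _ ≤ M + M := (measure_union_le _ _).trans
      (add_le_add (hM N (Finset.mem_Icc.mpr ⟨hk1.trans hkN, le_rfl⟩)) (hM k hk))
    _ = 2 * M := (two_mul M).symm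
  have hB : B ⊆ B ∩ {ω | t < ‖partialSum Y N ω‖} ∪ B ∩ D := by
    rw [← inter_union_distrib_left]
    exact subset_inter subset_rfl (firstPassage_subset_union _ htu k N)
  calc P B ≤ P (B ∩ {ω | t < ‖partialSum Y N ω‖}) + P (B ∩ D) :=
        (measure_mono hB).trans (measure_union_le _ _)
    _ = P (B ∩ {ω | t < ‖partialSum Y N ω‖}) + P B * P D := by
        rw [hind.measure_firstPassage_inter_eq_mul hY hkN]
    _ ≤ P (B ∩ {ω | t < ‖partialSum Y N ω‖}) + P B * (2 * M) := by gcongr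

theorem iIndepFun.etemadi_inequality [IsProbabilityMeasure P] (hY : ∀ i, Measurable (Y i))
    (hind : iIndepFun Y P) (N : ℕ) {t u : ℝ} (htu : 3 * t ≤ u) :
    P {ω | ∃ k, 1 ≤ k ∧ k ≤ N ∧ u < ‖partialSum Y k ω‖} ≤
      3 * (Finset.Icc 1 N).sup fun k => P {ω | t < ‖partialSum Y k ω‖} := by
  set M := (Finset.Icc 1 N).sup fun k => P {ω | t < ‖partialSum Y k ω‖}
  have hM : ∀ k ∈ Finset.Icc 1 N, P {ω | t < ‖partialSum Y k ω‖} ≤ M := fun k hk =>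
    Finset.le_sup (f := fun k => P {ω | t < ‖partialSum Y k ω‖}) hk
  set B := firstPassage (partialSum Y) u
  have hBdisj : (↑(Finset.Icc 1 N) : Set ℕ).PairwiseDisjoint B :=
    (pairwiseDisjoint_firstPassage _ u).subset fun k hk => (Finset.mem_Icc.mp hk).1
  have hBmeas : ∀ k, MeasurableSet (B k) := fun k =>
    measurableSet_firstPassage (fun j _ => measurable_partialSum fun i _ => hY i) u
  rw [setOf_exists_lt_norm_eq_biUnion_firstPassage,
    measure_biUnion_finset hBdisj fun k _ => hBmeas k]
  rcases Nat.eq_zero_or_pos N with rfl | hN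
  · simp
  set A := {ω | t < ‖partialSum Y N ω‖}
  have hA : P A ≤ M := hM N (Finset.mem_Icc.mpr ⟨hN, le_rfl⟩)
  calc ∑ k ∈ Finset.Icc 1 N, P (B k)
      ≤ ∑ k ∈ Finset.Icc 1 N, (P (B k ∩ A) + P (B k) * (2 * M)) :=
        Finset.sum_le_sum fun k hk => hind.measure_firstPassage_le hY htu hk hM
    _ = P (⋃ k ∈ Finset.Icc 1 N, B k ∩ A) + P (⋃ k ∈ Finset.Icc 1 N, B k) * (2 * M) := by
        rw [Finset.sum_add_distrib, ← Finset.sum_mul,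
          measure_biUnion_finset (hBdisj.mono_on fun k _ => inter_subset_left)
            fun k _ => (hBmeas k).inter (measurableSet_lt measurable_const
              (measurable_partialSum fun i _ => hY i).norm),
          measure_biUnion_finset hBdisj fun k _ => hBmeas k]
    _ ≤ M + 1 * (2 * M) := by
        gcongr
        · exact (measure_mono (iUnion₂_subset fun k _ => inter_subset_right)).trans hA
        · exact prob_le_one
    _ = 3 * M := by ring

end Etemadi

end ProbabilityTheory

lemma tendsto_limsup_nhds_zero_of_le_const_mul {α β : Type*} {l : Filter α} {l' : Filter β}
    {f g : α → β → ℝ≥0∞} {c : ℝ≥0∞} (hc : c ≠ ∞) (hfg : ∀ x y, f x y ≤ c * g x y)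
    (hg : Tendsto (fun x => limsup (g x) l') l (𝓝 0)) :
    Tendsto (fun x => limsup (f x) l') l (𝓝 0) := by
  have h := ENNReal.Tendsto.const_mul hg (Or.inr hc)
  rw [mul_zero] at h
  refine tendsto_of_tendsto_of_tendsto_of_le_of_le tendsto_const_nhds h (fun _ => zero_le)
    fun x => ?_
  rw [← ENNReal.limsup_const_mul_of_ne_top hc]
  exact limsup_le_limsup (Eventually.of_forall (hfg x))

theorem maximal_asymptotic_negligibility_general
    {E : Type*} [NormedAddCommGroup E] [NormedSpace ℝ E]
    [TopologicalSpace.SeparableSpace E] [MeasurableSpace E] [BorelSpace E]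
    {Ω : Type*} [MeasurableSpace Ω] (P : Measure Ω) [IsProbabilityMeasure P]
    (X : ℕ → Ω → E) (hXmeas : ∀ i, Measurable (X i))
    (hXindep : iIndepFun X P)
    (a : ℕ → ℝ)
    (hAN : ∀ δ : ℝ, 0 < δ → ∀ T : ℝ, 0 < T →
      Tendsto (fun ε : ℝ =>
          Filter.limsup (fun n : ℕ =>
            (Finset.Icc 1 (Nat.floor ((n : ℝ) * T))).sup (fun k =>
              P {ω | a n * δ < ‖∑ i ∈ Finset.range k,
                ((if ‖X i ω‖ ≤ a n * ε then X i ω else 0)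
                  - ∫ ω', (if ‖X i ω'‖ ≤ a n * ε then X i ω' else 0) ∂P)‖})) atTop)
        (nhdsWithin 0 (Set.Ioi 0)) (nhds 0)) :
    ∀ δ : ℝ, 0 < δ → ∀ T : ℝ, 0 < T →
      Tendsto (fun ε : ℝ =>
          Filter.limsup (fun n : ℕ =>
            P {ω | ∃ k : ℕ, 1 ≤ k ∧ k ≤ Nat.floor ((n : ℝ) * T) ∧
              a n * δ < ‖∑ i ∈ Finset.range k,
                ((if ‖X i ω‖ ≤ a n * ε then X i ω else 0)
                  - ∫ ω', (if ‖X i ω'‖ ≤ a n * ε then X i ω' else 0) ∂P)‖}) atTop)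
        (nhdsWithin 0 (Set.Ioi 0)) (nhds 0) := by
  intro δ hδ T hT
  have := UniformSpace.secondCountable_of_separable E
  refine tendsto_limsup_nhds_zero_of_le_const_mul (c := 3) ENNReal.ofNat_ne_top (fun ε n => ?_)
    (hAN (δ / 3) (by positivity) T hT)
  set g : ℕ → E → E := fun i x => (if ‖x‖ ≤ a n * ε then x else 0)
    - ∫ ω', (if ‖X i ω'‖ ≤ a n * ε then X i ω' else 0) ∂P
  have hg : ∀ i, Measurable (g i) := fun i =>
    (measurable_id.ite (measurableSet_le measurable_norm measurable_const)
      measurable_const).sub_const _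
  exact (hXindep.comp g hg).etemadi_inequality (fun i => (hg i).comp (hXmeas i)) _
    (t := a n * (δ / 3)) (u := a n * δ) (le_of_eq (by ring))

/-- Let `(Xᵢ)` be independent random elements of a separable Banach
space `E` and `(aₙ)` positive reals. If condition (AN) holds, i.e. for all `δ, T > 0`,
`lim_{ε↓0} limsup_n max_{1 ≤ k ≤ ⌊nT⌋}
  P( ‖ Σ_{i=1}^k ( Xᵢ 1{‖Xᵢ‖ ≤ aₙ ε} − E[Xᵢ 1{‖Xᵢ‖ ≤ aₙ ε}] ) ‖ > aₙ δ ) = 0`,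
then the maximal version holds: for all `δ, T > 0`,
`lim_{ε↓0} limsup_n
  P( max_{1 ≤ k ≤ ⌊nT⌋} ‖ Σ_{i=1}^k ( Xᵢ 1{‖Xᵢ‖ ≤ aₙ ε} − E[Xᵢ 1{‖Xᵢ‖ ≤ aₙ ε}] ) ‖ > aₙ δ ) = 0`. -/
theorem maximal_asymptotic_negligibility
    {E : Type*} [NormedAddCommGroup E] [NormedSpace ℝ E] [CompleteSpace E]
    [TopologicalSpace.SeparableSpace E] [MeasurableSpace E] [BorelSpace E]
    {Ω : Type*} [MeasurableSpace Ω] (P : Measure Ω) [IsProbabilityMeasure P]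
    (X : ℕ → Ω → E) (hXmeas : ∀ i, Measurable (X i))
    (hXindep : iIndepFun X P)
    (a : ℕ → ℝ) (ha_pos : ∀ n, 0 < a n)
    (hXint : ∀ (n : ℕ) (ε : ℝ) (i : ℕ),
      Integrable (fun ω => if ‖X i ω‖ ≤ a n * ε then X i ω else 0) P)
    (hAN : ∀ δ : ℝ, 0 < δ → ∀ T : ℝ, 0 < T →
      Tendsto (fun ε : ℝ =>
          Filter.limsup (fun n : ℕ =>
            (Finset.Icc 1 (Nat.floor ((n : ℝ) * T))).sup (fun k =>
              P {ω | a n * δ < ‖∑ i ∈ Finset.range k,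
                ((if ‖X i ω‖ ≤ a n * ε then X i ω else 0)
                  - ∫ ω', (if ‖X i ω'‖ ≤ a n * ε then X i ω' else 0) ∂P)‖})) atTop)
        (nhdsWithin 0 (Set.Ioi 0)) (nhds 0)) :
    ∀ δ : ℝ, 0 < δ → ∀ T : ℝ, 0 < T →
      Tendsto (fun ε : ℝ =>
          Filter.limsup (fun n : ℕ =>
            P {ω | ∃ k : ℕ, 1 ≤ k ∧ k ≤ Nat.floor ((n : ℝ) * T) ∧
              a n * δ < ‖∑ i ∈ Finset.range k,
                ((if ‖X i ω‖ ≤ a n * ε then X i ω else 0)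
                  - ∫ ω', (if ‖X i ω'‖ ≤ a n * ε then X i ω' else 0) ∂P)‖}) atTop)
        (nhdsWithin 0 (Set.Ioi 0)) (nhds 0) :=
  maximal_asymptotic_negligibility_general P X hXmeas hXindep a hAN
end
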